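/- arXiv:1503.05629 — 8 statements merged into one kernel-verified Lean document; each statement's English description precedes it below -/
import Mathlib

section
/- Let f be a continuous function on [0,b] with b > 0 such that f is differentiable with negative derivative on (0,b), f(b) = 0, and ∫₀^b f dx = 1. Assuming the differential entropies of f and of its inverse f⁻¹ both exist, the sum of the differential entropies satisfies -∫₀^b f·ln(f) dx - ∫₀^{f(0)} f⁻¹·ln(f⁻¹) dy = -1 - ∫₀^b f·ln(x·f(x)) dx. -/
open MeasureTheory intervalIntegral Real Set

/-! Substituting `y = f x` turns the entropy integral of `f⁻¹` into `-∫₀ᵇ x log x · f'(x) dx`.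
Integrating by parts, the boundary terms vanish because `f b = 0` and `x log x = 0` at `x = 0`,
leaving `∫₀ᵇ f (log x + 1) = ∫₀ᵇ f log x + 1`; it remains to split `log (x f) = log x + log f`. -/

section

variable {f f' g : ℝ → ℝ} {a b : ℝ}

theorem integral_comp_leftInvOn_eq_neg_integral_mul_deriv (hab : a ≤ b)
    (hf : ContinuousOn f (Icc a b)) (hff' : ∀ x ∈ Ioo a b, HasDerivAt f (f' x) x)
    (hf' : ∀ x ∈ Ioo a b, f' x < 0) (hgf : ∀ x ∈ Ioo a b, g (f x) = x) (φ : ℝ → ℝ) :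
    ∫ y in f b..f a, φ (g y) = -∫ x in a..b, φ x * f' x := by
  have hanti : StrictAntiOn f (Icc a b) :=
    strictAntiOn_of_hasDerivWithinAt_neg (convex_Icc a b) hf
      (by simpa only [interior_Icc] using fun x hx ↦ (hff' x hx).hasDerivWithinAt)
      (by simpa only [interior_Icc] using hf')
  have hfba : f b ≤ f a :=
    hanti.antitoneOn (left_mem_Icc.2 hab) (right_mem_Icc.2 hab) hab
  rw [integral_of_le hfba, integral_Ioc_eq_integral_Ioo,
    ← hf.image_Ioo_of_strictAntiOn hab hanti,
    integral_image_eq_integral_abs_deriv_smul measurableSet_Ioo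
      (fun x hx ↦ (hff' x hx).hasDerivWithinAt) (hanti.injOn.mono Ioo_subset_Icc_self),
    integral_of_le hab, integral_Ioc_eq_integral_Ioo, ← MeasureTheory.integral_neg]
  refine setIntegral_congr_fun measurableSet_Ioo fun x hx ↦ ?_
  simp only [smul_eq_mul, abs_of_neg (hf' x hx), hgf x hx]
  ring

theorem intervalIntegrable_deriv_of_nonpos (hf : ContinuousOn f (uIcc a b))
    (hff' : ∀ x ∈ Ioo (min a b) (max a b), HasDerivAt f (f' x) x)
    (hf' : ∀ x ∈ Ioo (min a b) (max a b), f' x ≤ 0) : IntervalIntegrable f' volume a b := by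
  simpa only [neg_neg] using (intervalIntegrable_deriv_of_nonneg (g' := -f') hf.neg
    (fun x hx ↦ (hff' x hx).neg) fun x hx ↦ neg_nonneg.2 (hf' x hx)).neg

theorem integral_mul_log_mul_deriv (ha : 0 ≤ a) (hab : a ≤ b) (hf : ContinuousOn f (Icc a b))
    (hff' : ∀ x ∈ Ioo a b, HasDerivAt f (f' x) x) (hf' : IntervalIntegrable f' volume a b) :
    ∫ x in a..b, x * log x * f' x =
      b * log b * f b - a * log a * f a - ∫ x in a..b, (log x + 1) * f x := by
  rw [← uIcc_of_le hab] at hf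
  refine integral_mul_deriv_eq_deriv_mul_of_hasDerivAt continuous_mul_log.continuousOn hf
    (fun x hx ↦ hasDerivAt_mul_log (ha.trans_lt ?_).ne') (fun x hx ↦ hff' x ?_)
    (intervalIntegrable_log'.add intervalIntegrable_const) hf'
  · simpa [hab] using hx.1
  · simpa [hab] using hx

theorem mul_log_mul_eq {x : ℝ} (hx : x ≠ 0) (y : ℝ) :
    y * log (x * y) = y * log x + y * log y := by
  rcases eq_or_ne y 0 with rfl | hy
  · simp
  · rw [log_mul hx hy, mul_add]

theorem integral_mul_log_mul_eq (hf : ContinuousOn f (uIcc a b)) :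
    ∫ x in a..b, f x * log (x * f x) =
      (∫ x in a..b, f x * log x) + ∫ x in a..b, f x * log (f x) := by
  have hf_log_f : IntervalIntegrable (fun x ↦ f x * log (f x)) volume a b :=
    (continuous_mul_log.comp_continuousOn hf).intervalIntegrable
  rw [← integral_add (intervalIntegrable_log'.continuousOn_mul hf) hf_log_f]
  refine integral_congr_ae ((Measure.ae_ne volume 0).mono fun x hx _ ↦ ?_)
  exact mul_log_mul_eq hx (f x)

end

theorem sum_differential_entropies_general (b : ℝ) (hb : 0 < b) (f g : ℝ → ℝ)
    (hf_cont : ContinuousOn f (Set.Icc 0 b))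
    (hf_diff : ∀ x ∈ Set.Ioo 0 b, DifferentiableAt ℝ f x)
    (hf_deriv_neg : ∀ x ∈ Set.Ioo 0 b, deriv f x < 0)
    (hfb : f b = 0)
    (hf_int : ∫ x in (0:ℝ)..b, f x = 1)
    (hg_left : ∀ x ∈ Set.Icc 0 b, g (f x) = x) :
    (-∫ x in (0:ℝ)..b, f x * Real.log (f x)) -
        ∫ y in (0:ℝ)..(f 0), g y * Real.log (g y) =
      -1 - ∫ x in (0:ℝ)..b, f x * Real.log (x * f x) := by
  have hff' : ∀ x ∈ Ioo 0 b, HasDerivAt f (deriv f x) x := fun x hx ↦ (hf_diff x hx).hasDerivAt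
  have hf_uIcc : ContinuousOn f (uIcc 0 b) := by rwa [uIcc_of_le hb.le]
  have hf'_int : IntervalIntegrable (deriv f) volume 0 b :=
    intervalIntegrable_deriv_of_nonpos hf_uIcc (by simpa [hb.le] using hff')
      (by simpa [hb.le] using fun x hx ↦ (hf_deriv_neg x hx).le)
  have h_subst := integral_comp_leftInvOn_eq_neg_integral_mul_deriv hb.le hf_cont hff'
    hf_deriv_neg (fun x hx ↦ hg_left x (Ioo_subset_Icc_self hx)) fun x ↦ x * log x
  have h_parts := integral_mul_log_mul_deriv le_rfl hb.le hf_cont hff' hf'_int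
  have h_one : ∫ x in (0:ℝ)..b, (log x + 1) * f x =
      (∫ x in (0:ℝ)..b, f x * log x) + ∫ x in (0:ℝ)..b, f x := by
    rw [← integral_add (intervalIntegrable_log'.continuousOn_mul hf_uIcc)
      hf_uIcc.intervalIntegrable]
    congr 1 with x
    ring
  rw [hfb] at h_subst
  rw [hfb, h_one, hf_int] at h_parts
  simp only [log_zero, mul_zero, zero_mul, sub_zero] at h_parts
  rw [integral_mul_log_mul_eq hf_uIcc, h_subst, h_parts]
  ring

/-- Let `f` be continuous on `[0,b]`, differentiable with negative derivative on `(0,b)`,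
with `f b = 0` and `∫₀ᵇ f = 1`.  If `g` is the inverse function of `f` (mapping
`[0, f 0]` back to `[0,b]`) and the differential entropies of `f` and `g` both exist
(i.e. the corresponding integrals converge), then the sum of the two differential
entropies equals `-1 - ∫₀ᵇ f ln(x f(x)) dx`. -/
theorem sum_differential_entropies (b : ℝ) (hb : 0 < b) (f g : ℝ → ℝ)
    (hf_cont : ContinuousOn f (Set.Icc 0 b))
    (hf_diff : ∀ x ∈ Set.Ioo 0 b, DifferentiableAt ℝ f x)
    (hf_deriv_neg : ∀ x ∈ Set.Ioo 0 b, deriv f x < 0)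
    (hfb : f b = 0)
    (hf_int : ∫ x in (0:ℝ)..b, f x = 1)
    (hg_left : ∀ x ∈ Set.Icc 0 b, g (f x) = x)
    (hg_right : ∀ y ∈ Set.Icc 0 (f 0), f (g y) = y)
    (h_ent_f : IntervalIntegrable (fun x => f x * Real.log (f x)) volume 0 b)
    (h_ent_g : IntervalIntegrable (fun y => g y * Real.log (g y)) volume 0 (f 0)) :
    (-∫ x in (0:ℝ)..b, f x * Real.log (f x)) -
        ∫ y in (0:ℝ)..(f 0), g y * Real.log (g y) =
      -1 - ∫ x in (0:ℝ)..b, f x * Real.log (x * f x) :=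
  sum_differential_entropies_general b hb f g hf_cont hf_diff hf_deriv_neg hfb hf_int hg_left
end

section
/- The genial entropy of the corner density f(x) = -ln(x) on (0,1] equals Euler's constant γ. -/
/-! Substituting `x = exp (-t)` turns the integral into `∫₀^∞ (t log t - t²) e^{-t} dt`.
Differentiating the Gamma integral under the integral sign identifies the first term with
`Γ'(2) = 1 - γ` (from `Γ'(n + 1) = n! (H_n - γ)`); the second is `Γ(3) = 2`. -/

open MeasureTheory Real Set
open scoped Nat

lemma integrableOn_pow_mul_exp_neg (n : ℕ) :
    IntegrableOn (fun t : ℝ => t ^ n * exp (-t)) (Ioi 0) := by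
  simpa using integrableOn_rpow_mul_exp_neg_rpow (s := n) (by linarith [n.cast_nonneg (α := ℝ)])
    one_pos

lemma integral_pow_mul_exp_neg (n : ℕ) : ∫ t in Ioi (0 : ℝ), t ^ n * exp (-t) = n ! := by
  simpa [Gamma_nat_eq_factorial] using
    integral_rpow_mul_exp_neg_mul_Ioi (a := n + 1) (by positivity) one_pos

lemma mellinConvergent_log_smul_exp_neg {s : ℂ} (hs : 0 < s.re) :
    MellinConvergent (fun t : ℝ => log t • (exp (-t) : ℂ)) s := by
  have hcont : Continuous fun t : ℝ => (exp (-t) : ℂ) := by fun_prop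
  refine (mellin_hasDerivAt_of_isBigO_rpow (a := s.re + 1) (b := 0)
    (hcont.continuousOn.locallyIntegrableOn measurableSet_Ioi) ?_ (lt_add_one _) ?_ hs).1
  · rw [← Asymptotics.isBigO_norm_left]
    simp_rw [Complex.norm_real, Asymptotics.isBigO_norm_left]
    simpa only [neg_one_mul] using (isLittleO_exp_neg_mul_rpow_atTop zero_lt_one _).isBigO
  · simp_rw [neg_zero, rpow_zero]
    refine Asymptotics.isBigO_const_of_tendsto (y := 1) ?_ one_ne_zero
    simpa using (hcont.tendsto 0).mono_left nhdsWithin_le_nhds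

lemma ofReal_rpow_mul_log_mul_exp_neg {t : ℝ} (ht : 0 < t) (s : ℝ) :
    ((t ^ (s - 1) * log t * exp (-t) : ℝ) : ℂ) =
      (t : ℂ) ^ ((s : ℂ) - 1) * (log t * exp (-t)) := by
  push_cast [Complex.ofReal_cpow ht.le]
  ring

lemma integrableOn_rpow_mul_log_mul_exp_neg {s : ℝ} (hs : 0 < s) :
    IntegrableOn (fun t : ℝ => t ^ (s - 1) * log t * exp (-t)) (Ioi 0) := by
  refine IntegrableOn.congr_fun (mellinConvergent_log_smul_exp_neg (s := s) (by simpa)).re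
    (fun t (ht : 0 < t) => ?_) measurableSet_Ioi
  simp only [Complex.real_smul, smul_eq_mul]
  rw [← ofReal_rpow_mul_log_mul_exp_neg ht, RCLike.re_to_complex, Complex.ofReal_re]

lemma hasDerivAt_Gamma_eq_integral_log {s : ℝ} (hs : 0 < s) :
    HasDerivAt Gamma (∫ t in Ioi 0, t ^ (s - 1) * log t * exp (-t)) s := by
  have hre : 0 < (s : ℂ).re := by simpa
  have hGamma := (Complex.hasDerivAt_GammaIntegral hre).congr_of_eventuallyEq <| by
    filter_upwards [(isOpen_lt continuous_const Complex.continuous_re).mem_nhds hre] with z hz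
    exact Complex.Gamma_eq_integral hz
  have hint : ∫ t in Ioi (0 : ℝ), (t : ℂ) ^ ((s : ℂ) - 1) * (log t * exp (-t))
      = ((∫ t in Ioi 0, t ^ (s - 1) * log t * exp (-t) : ℝ) : ℂ) := by
    refine (setIntegral_congr_fun measurableSet_Ioi fun t ht => ?_).trans integral_ofReal
    exact (ofReal_rpow_mul_log_mul_exp_neg ht s).symm
  rw [hint] at hGamma
  simpa [Complex.Gamma_ofReal] using hGamma.real_of_complex

lemma integrableOn_pow_mul_log_mul_exp_neg (n : ℕ) :
    IntegrableOn (fun t : ℝ => t ^ n * log t * exp (-t)) (Ioi 0) := by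
  simpa using integrableOn_rpow_mul_log_mul_exp_neg (s := n + 1) (by positivity)

lemma integral_pow_mul_log_mul_exp_neg (n : ℕ) :
    ∫ t in Ioi (0 : ℝ), t ^ n * log t * exp (-t) =
      n ! * (harmonic n - eulerMascheroniConstant) := by
  have := (hasDerivAt_Gamma_eq_integral_log (s := n + 1) (by positivity)).unique
    (hasDerivAt_Gamma_nat n)
  simpa [neg_add_eq_sub] using this

lemma integral_comp_exp_neg_Ioi {E : Type*} [NormedAddCommGroup E] [NormedSpace ℝ E]
    (g : ℝ → E) : ∫ t in Ioi 0, exp (-t) • g (exp (-t)) = ∫ x in Ioo 0 1, g x := by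
  have himage : (fun t => exp (-t)) '' Ioi 0 = Ioo 0 1 := by
    rw [← exp_zero, ← image_exp_Iio, ← neg_zero, ← image_neg_Ioi, image_image, neg_zero]
  symm
  rw [← himage, integral_image_eq_integral_abs_deriv_smul measurableSet_Ioi
    (fun t _ => ((hasDerivAt_neg t).exp).hasDerivWithinAt)
    (fun a _ b _ h => neg_injective (exp_injective h))]
  simp

/-- The genial entropy of the corner density `f(x) = -ln x` on `(0,1]` equals
Euler's constant `γ`. -/
theorem genial_entropy_neg_log :
    -1 - ∫ x in Set.Ioc (0:ℝ) 1, (-Real.log x) * Real.log (x * (-Real.log x)) =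
      Real.eulerMascheroniConstant := by
  have hsubst : ∫ x in Ioc (0 : ℝ) 1, (-log x) * log (x * (-log x))
      = ∫ t in Ioi (0 : ℝ), (t ^ 1 * log t * exp (-t) - t ^ 2 * exp (-t)) := by
    rw [integral_Ioc_eq_integral_Ioo, ← integral_comp_exp_neg_Ioi]
    refine setIntegral_congr_fun measurableSet_Ioi fun t (ht : 0 < t) => ?_
    rw [log_exp, neg_neg, log_mul (exp_ne_zero _) ht.ne', log_exp, smul_eq_mul]
    ring
  rw [hsubst, integral_sub (integrableOn_pow_mul_log_mul_exp_neg 1)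
    (integrableOn_pow_mul_exp_neg 2), integral_pow_mul_log_mul_exp_neg, integral_pow_mul_exp_neg]
  norm_num
  ring
end

section
/- Let D = (d₁, ..., dₙ) be a sequence with d₁ ≥ d₂ ≥ ... ≥ dₙ > 0, let μ be its mean, and let D* = (d₁/μ, ..., dₙ/μ). Let f_{D*} be the step function on [0,1) taking the value dᵢ/μ on [(i-1)/n, i/n), and let L_{D*}(y) = (number of i with dᵢ/μ ≤ y)/n be the empirical CDF restricted to [0,∞). Then f_{D*} and 1 - L_{D*} are both corner densities and they have the same genial entropy. -/
open MeasureTheory Real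

/-- A corner density: a monotone decreasing nonnegative function `f : I → [0,∞)` where
`I ∪ {0}` is a connected interval contained in `[0,∞)` and `∫_I f = 1`. -/
def IsCornerDensity (I : Set ℝ) (f : ℝ → ℝ) : Prop :=
  I ⊆ Set.Ici 0 ∧ (insert (0:ℝ) I).OrdConnected ∧ AntitoneOn f I ∧
    (∀ x ∈ I, 0 ≤ f x) ∧ ∫ x in I, f x = 1

/-- The genial entropy of a corner density. -/
noncomputable def genialEntropy (I : Set ℝ) (f : ℝ → ℝ) : ℝ :=
  -1 - ∫ x in I, f x * Real.log (x * f x)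

/-!
Write `aₖ = dₖ/μ` and `aₙ₊₁ = 0`. The graph of `f_{D*}` is a staircase with columns
`[(k-1)/n, k/n) × [0, aₖ]`, and `1 - L_{D*}` is the staircase with rows `[aₖ₊₁, aₖ) × [0, k/n]`:
the same region reflected in the diagonal. On a step of height `A` over `[c, d]` one has
`∫ A ψ(A x) dx = Ψ(A d) - Ψ(A c)` for a primitive `Ψ` of `ψ`, so `∫ h(x) ψ(x h(x)) dx` is a signed
sum of `Ψ` over the corners of the staircase `h`. The two corner sums differ by a telescoping sum
whose end terms are both `Ψ(0)`, coming from the outer corners `(0, a₁)` and `(1, 0)`. Taking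
`ψ = 1` gives equal masses, taking `ψ = log` equal genial entropies.
-/

theorem isCornerDensity_of_zero_mem {I : Set ℝ} {f : ℝ → ℝ} (h0 : 0 ∈ I) (hI : I ⊆ Set.Ici 0)
    (hI' : I.OrdConnected) (hf : AntitoneOn f I) (hf0 : ∀ x ∈ I, 0 ≤ f x)
    (hint : ∫ x in I, f x = 1) : IsCornerDensity I f :=
  ⟨hI, (Set.insert_eq_of_mem h0).symm ▸ hI', hf, hf0, hint⟩

section Staircase

open Set

variable {ψ Ψ : ℝ → ℝ}

theorem intervalIntegrable_const_mul_comp_const_mul (hψ : ∀ c d, IntervalIntegrable ψ volume c d)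
    (A c d : ℝ) : IntervalIntegrable (fun x => A * ψ (A * x)) volume c d := by
  rcases eq_or_ne A 0 with rfl | hA
  · simp
  · simpa [mul_div_cancel_left₀ _ hA] using
      ((hψ (A * c) (A * d)).comp_mul_left (c := A)).const_mul A

theorem intervalIntegral_const_mul_comp_const_mul (hΨ : ∀ c d, ∫ x in c..d, ψ x = Ψ d - Ψ c)
    (A c d : ℝ) : ∫ x in c..d, A * ψ (A * x) = Ψ (A * d) - Ψ (A * c) := by
  rcases eq_or_ne A 0 with rfl | hA
  · simp
  · rw [intervalIntegral.integral_const_mul, intervalIntegral.integral_comp_mul_left _ hA, hΨ,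
      smul_eq_mul, mul_inv_cancel_left₀ hA]

theorem intervalIntegral_mul_comp_mul_eq_sum (hψ : ∀ c d, IntervalIntegrable ψ volume c d)
    (hΨ : ∀ c d, ∫ x in c..d, ψ x = Ψ d - Ψ c) {h : ℝ → ℝ} {t v : ℕ → ℝ} {N : ℕ}
    (hh : ∀ k < N, EqOn h (fun _ => v k) (uIoo (t k) (t (k + 1)))) :
    ∫ x in t 0..t N, h x * ψ (x * h x) =
      ∑ k ∈ Finset.range N, (Ψ (v k * t (k + 1)) - Ψ (v k * t k)) := by
  have hpiece : ∀ k < N, EqOn (fun x => v k * ψ (v k * x)) (fun x => h x * ψ (x * h x))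
      (uIoo (t k) (t (k + 1))) := fun k hk x hx => by
    simp only [hh k hk hx, mul_comm x]
  rw [← intervalIntegral.sum_integral_adjacent_intervals fun k hk =>
    (intervalIntegrable_const_mul_comp_const_mul hψ _ _ _).congr_uIoo (hpiece k hk)]
  refine Finset.sum_congr rfl fun k hk => ?_
  rw [← intervalIntegral.integral_congr_uIoo (hpiece k (Finset.mem_range.1 hk)),
    intervalIntegral_const_mul_comp_const_mul hΨ]

theorem sum_columns_add_sum_rows_eq_zero (Ψ : ℝ → ℝ) {a s : ℕ → ℝ} {n : ℕ} (hs : s 0 = 0)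
    (ha : a (n + 1) = 0) :
    ∑ k ∈ Finset.range n, (Ψ (a (k + 1) * s (k + 1)) - Ψ (a (k + 1) * s k)) +
      ∑ k ∈ Finset.range n, (Ψ (s (k + 1) * a (k + 2)) - Ψ (s (k + 1) * a (k + 1))) = 0 := by
  rw [← Finset.sum_add_distrib]
  have hterm : ∀ k ∈ Finset.range n,
      Ψ (a (k + 1) * s (k + 1)) - Ψ (a (k + 1) * s k) +
        (Ψ (s (k + 1) * a (k + 2)) - Ψ (s (k + 1) * a (k + 1))) =
      Ψ (s (k + 1) * a (k + 1 + 1)) - Ψ (s k * a (k + 1)) := fun k _ => by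
    rw [mul_comm (s (k + 1)) (a (k + 1)), mul_comm (a (k + 1)) (s k)]; ring
  rw [Finset.sum_congr rfl hterm, Finset.sum_range_sub (fun k => Ψ (s k * a (k + 1))), hs, ha,
    mul_zero, zero_mul, sub_self]

theorem setIntegral_Ico_eq_intervalIntegral {f : ℝ → ℝ} {a b : ℝ} (hab : a ≤ b) :
    ∫ x in Ico a b, f x = ∫ x in a..b, f x := by
  rw [intervalIntegral.integral_of_le hab, integral_Ico_eq_integral_Ioo,
    integral_Ioc_eq_integral_Ioo]

variable {n : ℕ} {a s : ℕ → ℝ} {f g : ℝ → ℝ}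

theorem setIntegral_Ico_mul_comp_of_columns (hψ : ∀ c d, IntervalIntegrable ψ volume c d)
    (hΨ : ∀ c d, ∫ x in c..d, ψ x = Ψ d - Ψ c) (hs0 : s 0 = 0) (hsn : s n = 1)
    (hf : ∀ k < n, EqOn f (fun _ => a (k + 1)) (uIoo (s k) (s (k + 1)))) :
    ∫ x in Ico 0 1, f x * ψ (x * f x) =
      ∑ k ∈ Finset.range n, (Ψ (a (k + 1) * s (k + 1)) - Ψ (a (k + 1) * s k)) := by
  rw [setIntegral_Ico_eq_intervalIntegral zero_le_one, ← hs0, ← hsn]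
  exact intervalIntegral_mul_comp_mul_eq_sum hψ hΨ hf

theorem setIntegral_Ici_mul_comp_of_rows (hψ : ∀ c d, IntervalIntegrable ψ volume c d)
    (hΨ : ∀ c d, ∫ x in c..d, ψ x = Ψ d - Ψ c) (ha1 : 0 ≤ a 1) (han : a (n + 1) = 0)
    (hg : ∀ k < n, EqOn g (fun _ => s (k + 1)) (uIoo (a (k + 1)) (a (k + 2))))
    (hg0 : ∀ y, a 1 ≤ y → g y = 0) :
    ∫ y in Ici 0, g y * ψ (y * g y) =
      -∑ k ∈ Finset.range n, (Ψ (s (k + 1) * a (k + 2)) - Ψ (s (k + 1) * a (k + 1))) := by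
  have hvanish : ∀ y ∈ Ici 0 \ Ico 0 (a 1), g y * ψ (y * g y) = 0 := fun y hy => by
    rw [hg0 y (not_lt.1 fun h => hy.2 ⟨hy.1, h⟩), zero_mul]
  rw [setIntegral_eq_of_subset_of_forall_sdiff_eq_zero measurableSet_Ici Ico_subset_Ici_self
    hvanish, setIntegral_Ico_eq_intervalIntegral ha1, intervalIntegral.integral_symm, ← han]
  exact congrArg Neg.neg (intervalIntegral_mul_comp_mul_eq_sum (t := fun k => a (k + 1)) hψ hΨ hg)

theorem setIntegral_columns_eq_setIntegral_rows
    (hψ : ∀ c d, IntervalIntegrable ψ volume c d) (hΨ : ∀ c d, ∫ x in c..d, ψ x = Ψ d - Ψ c)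
    (hs0 : s 0 = 0) (hsn : s n = 1) (ha1 : 0 ≤ a 1) (han : a (n + 1) = 0)
    (hf : ∀ k < n, EqOn f (fun _ => a (k + 1)) (uIoo (s k) (s (k + 1))))
    (hg : ∀ k < n, EqOn g (fun _ => s (k + 1)) (uIoo (a (k + 1)) (a (k + 2))))
    (hg0 : ∀ y, a 1 ≤ y → g y = 0) :
    ∫ x in Ico 0 1, f x * ψ (x * f x) = ∫ y in Ici 0, g y * ψ (y * g y) := by
  rw [setIntegral_Ico_mul_comp_of_columns hψ hΨ hs0 hsn hf,
    setIntegral_Ici_mul_comp_of_rows hψ hΨ ha1 han hg hg0, eq_neg_iff_add_eq_zero,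
    sum_columns_add_sum_rows_eq_zero Ψ hs0 han]

end Staircase

section StepDensity

open Set

variable {n : ℕ} {a : ℕ → ℝ} {f : ℝ → ℝ}

theorem floor_mul_natCast_eq_of_mem_Ioo (hn : 0 < n) {k : ℕ} {x : ℝ}
    (hx : x ∈ Ioo ((k : ℝ) / n) (((k + 1 : ℕ) : ℝ) / n)) : ⌊x * n⌋₊ = k := by
  have hnR : (0 : ℝ) < n := Nat.cast_pos.2 hn
  obtain ⟨hkx, hxk⟩ := hx
  rw [div_lt_iff₀ hnR] at hkx
  rw [lt_div_iff₀ hnR, Nat.cast_succ] at hxk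
  rw [Nat.floor_eq_iff ((Nat.cast_nonneg k).trans hkx.le)]
  exact ⟨hkx.le, hxk⟩

theorem eqOn_const_of_eq_floor (hn : 0 < n) (hf : ∀ x ∈ Ico (0 : ℝ) 1, f x = a (⌊x * n⌋₊ + 1))
    {k : ℕ} (hk : k < n) :
    EqOn f (fun _ => a (k + 1)) (uIoo ((k : ℝ) / n) (((k + 1 : ℕ) : ℝ) / n)) := by
  have hnR : (0 : ℝ) < n := Nat.cast_pos.2 hn
  intro x hx
  rw [uIoo_of_le (by gcongr; simp)] at hx
  have hx1 : x < 1 := hx.2.trans_le ((div_le_one hnR).2 (Nat.cast_le.2 hk))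
  rw [hf x ⟨hx.1.le.trans' (by positivity), hx1⟩, floor_mul_natCast_eq_of_mem_Ioo hn hx]

theorem antitoneOn_of_eq_floor (ha : AntitoneOn a (Ici 1))
    (hf : ∀ x ∈ Ico (0 : ℝ) 1, f x = a (⌊x * n⌋₊ + 1)) : AntitoneOn f (Ico 0 1) := by
  intro x hx y hy hxy
  rw [hf x hx, hf y hy]
  exact ha (by simp) (by simp) (by gcongr)

theorem setIntegral_Ico_of_eq_floor (hn : 0 < n)
    (hf : ∀ x ∈ Ico (0 : ℝ) 1, f x = a (⌊x * n⌋₊ + 1)) :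
    ∫ x in Ico 0 1, f x = (∑ k ∈ Finset.range n, a (k + 1)) / n := by
  have hnR : (0 : ℝ) < n := Nat.cast_pos.2 hn
  have hcols := setIntegral_Ico_mul_comp_of_columns (ψ := fun _ => 1) (Ψ := id)
    (s := fun k => (k : ℝ) / n) (fun _ _ => intervalIntegrable_const) (fun _ _ => by simp)
    (by simp) (div_self hnR.ne') fun k hk => eqOn_const_of_eq_floor hn hf hk
  simp only [mul_one, id] at hcols
  rw [hcols, Finset.sum_div]
  refine Finset.sum_congr rfl fun k _ => ?_
  push_cast
  ring

end StepDensity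

noncomputable def empiricalCDF (n : ℕ) (a : ℕ → ℝ) (y : ℝ) : ℝ :=
  ((Finset.Icc 1 n).filter (fun i => a i ≤ y)).card / n

section EmpiricalCDF

open Set

variable {n m : ℕ} {a : ℕ → ℝ} {L : ℝ → ℝ} {y : ℝ}

theorem filter_le_eq_Icc (ha : AntitoneOn a (Ici 1)) (hm : a (m + 1) ≤ y)
    (hy : ∀ i ∈ Finset.Icc 1 m, y < a i) :
    (Finset.Icc 1 n).filter (fun i => a i ≤ y) = Finset.Icc (m + 1) n := by
  ext i
  simp only [Finset.mem_filter, Finset.mem_Icc]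
  constructor
  · rintro ⟨⟨hi1, hin⟩, hiy⟩
    refine ⟨not_lt.1 fun him => ?_, hin⟩
    exact (hy i (Finset.mem_Icc.2 ⟨hi1, Nat.lt_succ_iff.1 him⟩)).not_ge hiy
  · rintro ⟨hmi, hin⟩
    exact ⟨⟨by omega, hin⟩, (ha (by simp) (by simp; omega) hmi).trans hm⟩

theorem one_sub_empiricalCDF_eq (hn : 0 < n) (hmn : m ≤ n) (ha : AntitoneOn a (Ici 1))
    (hm : a (m + 1) ≤ y) (hy : ∀ i ∈ Finset.Icc 1 m, y < a i) :
    1 - empiricalCDF n a y = m / n := by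
  have hnR : (0 : ℝ) < n := Nat.cast_pos.2 hn
  rw [empiricalCDF, filter_le_eq_Icc ha hm hy, Nat.card_Icc, Nat.add_sub_add_right,
    Nat.cast_sub hmn]
  field_simp
  ring

theorem eqOn_one_sub_of_eqOn_empiricalCDF (hn : 0 < n) (ha : AntitoneOn a (Ici 1))
    (ha0 : ∀ i, 1 ≤ i → 0 ≤ a i) (hL : EqOn L (empiricalCDF n a) (Ici 0)) {k : ℕ} (hk : k < n) :
    EqOn (fun y => 1 - L y) (fun _ => ((k + 1 : ℕ) : ℝ) / n) (uIoo (a (k + 1)) (a (k + 2))) := by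
  intro y hy
  rw [uIoo_of_ge (ha (by simp) (by simp) (by omega))] at hy
  dsimp only
  rw [hL ((ha0 _ (by omega)).trans hy.1.le)]
  exact one_sub_empiricalCDF_eq hn hk ha hy.1.le
    fun i hi => hy.2.trans_le (ha (Finset.mem_Icc.1 hi).1 (by simp) (Finset.mem_Icc.1 hi).2)

theorem one_sub_eq_zero_of_eqOn_empiricalCDF (hn : 0 < n) (ha : AntitoneOn a (Ici 1))
    (ha0 : ∀ i, 1 ≤ i → 0 ≤ a i) (hL : EqOn L (empiricalCDF n a) (Ici 0)) (hy : a 1 ≤ y) :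
    1 - L y = 0 := by
  rw [hL ((ha0 1 le_rfl).trans hy)]
  simpa using one_sub_empiricalCDF_eq hn (Nat.zero_le n) ha hy (by simp)

theorem monotone_empiricalCDF : Monotone (empiricalCDF n a) := by
  intro y z hyz
  unfold empiricalCDF
  gcongr

theorem empiricalCDF_le_one : empiricalCDF n a y ≤ 1 := by
  refine div_le_one_of_le₀ ?_ (Nat.cast_nonneg n)
  exact_mod_cast (Finset.card_filter_le _ _).trans (by simp)

theorem antitoneOn_one_sub_of_eqOn_empiricalCDF (hL : EqOn L (empiricalCDF n a) (Ici 0)) :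
    AntitoneOn (fun y => 1 - L y) (Ici 0) := fun y hy z hz hyz => by
  simpa only [hL hy, hL hz, sub_le_sub_iff_left] using monotone_empiricalCDF hyz

theorem one_sub_nonneg_of_eqOn_empiricalCDF (hL : EqOn L (empiricalCDF n a) (Ici 0))
    (hy : y ∈ Ici 0) : 0 ≤ 1 - L y := by
  simpa only [hL hy, sub_nonneg] using empiricalCDF_le_one

end EmpiricalCDF

/-- `D* = (d₁/μ, …, dₙ/μ)`, padded with zeros: `aₙ₊₁ = 0` is the height at which the last row of
the staircase starts. -/
noncomputable def normalizedSeq (n : ℕ) (d : ℕ → ℝ) (μ : ℝ) (i : ℕ) : ℝ :=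
  if i ≤ n then d i / μ else 0

section NormalizedSeq

variable {n : ℕ} {d : ℕ → ℝ} {μ : ℝ}

theorem normalizedSeq_of_le {i : ℕ} (hi : i ≤ n) : normalizedSeq n d μ i = d i / μ := if_pos hi

theorem normalizedSeq_of_lt {i : ℕ} (hi : n < i) : normalizedSeq n d μ i = 0 :=
  if_neg hi.not_ge

theorem normalizedSeq_nonneg (hμ : 0 < μ) (hpos : ∀ i, 1 ≤ i → i ≤ n → 0 < d i) {i : ℕ}
    (hi : 1 ≤ i) : 0 ≤ normalizedSeq n d μ i := by
  unfold normalizedSeq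
  split_ifs with hin
  · exact (div_pos (hpos i hi hin) hμ).le
  · exact le_rfl

theorem antitoneOn_normalizedSeq (hμ : 0 < μ) (hmono : ∀ i, 1 ≤ i → i < n → d (i + 1) ≤ d i)
    (hpos : ∀ i, 1 ≤ i → i ≤ n → 0 < d i) : AntitoneOn (normalizedSeq n d μ) (Set.Ici 1) := by
  refine antitoneOn_nat_Ici_of_succ_le fun i hi => ?_
  rcases lt_or_ge i n with hin | hin
  · rw [normalizedSeq_of_le hin, normalizedSeq_of_le hin.le]
    exact div_le_div_of_nonneg_right (hmono i hi hin) hμ.le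
  · rw [normalizedSeq_of_lt (Nat.lt_succ_of_le hin)]
    exact normalizedSeq_nonneg hμ hpos hi

theorem sum_normalizedSeq (hμ : μ = (∑ i ∈ Finset.Icc 1 n, d i) / n) (hμ0 : μ ≠ 0) :
    ∑ k ∈ Finset.range n, normalizedSeq n d μ (k + 1) = n := by
  have hsum : ∑ i ∈ Finset.Icc 1 n, d i = ∑ k ∈ Finset.range n, d (k + 1) := by
    rw [← Finset.Ico_add_one_right_eq_Icc, Finset.sum_Ico_eq_sum_range, Nat.add_sub_cancel]
    simp only [add_comm 1]
  rw [Finset.sum_congr rfl fun k hk => normalizedSeq_of_le (Finset.mem_range.1 hk),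
    ← Finset.sum_div, ← hsum, hμ, div_div_cancel₀]
  rintro hzero
  simp [hμ, hzero] at hμ0

theorem eq_normalizedSeq_floor (hn : 0 < n) {f : ℝ → ℝ}
    (hf : ∀ x ∈ Set.Ico (0 : ℝ) 1, f x = d (⌊x * n⌋₊ + 1) / μ) :
    ∀ x ∈ Set.Ico (0 : ℝ) 1, f x = normalizedSeq n d μ (⌊x * n⌋₊ + 1) := fun x hx => by
  have hnR : (0 : ℝ) < n := Nat.cast_pos.2 hn
  rw [hf x hx, normalizedSeq_of_le]
  exact (Nat.floor_lt (by nlinarith [hx.1])).2 (by nlinarith [hx.2])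

theorem empiricalCDF_normalizedSeq (y : ℝ) : empiricalCDF n (normalizedSeq n d μ) y =
    ((Finset.Icc 1 n).filter (fun i => d i / μ ≤ y)).card / n := by
  rw [empiricalCDF, Finset.filter_congr fun i hi => by
    rw [normalizedSeq_of_le (Finset.mem_Icc.1 hi).2]]

end NormalizedSeq

/-- Let `d 1 ≥ d 2 ≥ ... ≥ d n > 0` with mean `μ`. Then the step function `f_{D*}` on
`[0,1)` taking the value `d i / μ` on `[(i-1)/n, i/n)`, and `1 - L_{D*}` on `[0,∞)`
(where `L_{D*}` is the empirical CDF of the normalized data), are both corner densities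
with the same genial entropy. -/
theorem step_density_and_ecdf_same_genial_entropy
    (n : ℕ) (hn : 0 < n) (d : ℕ → ℝ)
    (hmono : ∀ i, 1 ≤ i → i < n → d (i + 1) ≤ d i)
    (hpos : ∀ i, 1 ≤ i → i ≤ n → 0 < d i)
    (μ : ℝ) (hμ : μ = (∑ i ∈ Finset.Icc 1 n, d i) / n)
    (fD : ℝ → ℝ) (hfD : ∀ x ∈ Set.Ico (0:ℝ) 1, fD x = d (⌊x * n⌋₊ + 1) / μ)
    (L : ℝ → ℝ)
    (hL : ∀ y ∈ Set.Ici (0:ℝ),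
      L y = ((Finset.Icc 1 n).filter (fun i => d i / μ ≤ y)).card / n) :
    IsCornerDensity (Set.Ico 0 1) fD ∧
      IsCornerDensity (Set.Ici 0) (fun y => 1 - L y) ∧
      genialEntropy (Set.Ico 0 1) fD = genialEntropy (Set.Ici 0) (fun y => 1 - L y) := by
  have hnR : (0 : ℝ) < n := Nat.cast_pos.2 hn
  have hμ0 : 0 < μ := hμ ▸ div_pos (Finset.sum_pos (fun i hi => hpos i (Finset.mem_Icc.1 hi).1
    (Finset.mem_Icc.1 hi).2) (Finset.nonempty_Icc.2 hn)) hnR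
  have ha := antitoneOn_normalizedSeq hμ0 hmono hpos
  have ha0 : ∀ i, 1 ≤ i → 0 ≤ normalizedSeq n d μ i := fun i => normalizedSeq_nonneg hμ0 hpos
  have hf := eq_normalizedSeq_floor hn hfD
  have hL' : Set.EqOn L (empiricalCDF n (normalizedSeq n d μ)) (Set.Ici 0) := fun y hy => by
    rw [hL y hy, empiricalCDF_normalizedSeq]
  have htranspose := fun ψ Ψ hψ hΨ =>
    setIntegral_columns_eq_setIntegral_rows (ψ := ψ) (Ψ := Ψ) (f := fD)
      (s := fun k => (k : ℝ) / n) (g := fun y => 1 - L y) hψ hΨ (by simp) (div_self hnR.ne')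
      (ha0 1 le_rfl) (normalizedSeq_of_lt (Nat.lt_succ_self n))
      (fun k hk => eqOn_const_of_eq_floor hn hf hk)
      (fun k hk => eqOn_one_sub_of_eqOn_empiricalCDF hn ha ha0 hL' hk)
      (fun y => one_sub_eq_zero_of_eqOn_empiricalCDF hn ha ha0 hL')
  have hint : ∫ x in Set.Ico 0 1, fD x = 1 := by
    rw [setIntegral_Ico_of_eq_floor hn hf, sum_normalizedSeq hμ hμ0.ne', div_self hnR.ne']
  have hint' := htranspose (fun _ => 1) id (fun _ _ => intervalIntegrable_const) (by simp)
  simp only [mul_one, hint] at hint'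
  refine ⟨isCornerDensity_of_zero_mem (by simp) (fun x hx => hx.1) Set.ordConnected_Ico
      (antitoneOn_of_eq_floor ha hf) (fun x hx => hf x hx ▸ ha0 _ le_add_self) hint,
    isCornerDensity_of_zero_mem Set.self_mem_Ici subset_rfl Set.ordConnected_Ici
      (antitoneOn_one_sub_of_eqOn_empiricalCDF hL')
      (fun y => one_sub_nonneg_of_eqOn_empiricalCDF hL') hint'.symm, ?_⟩
  rw [genialEntropy, genialEntropy, htranspose log (fun x => x * log x - x)
    (fun _ _ => intervalIntegral.intervalIntegrable_log') (fun c d => by rw [integral_log]; ring)]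
end

section
/- Suppose y₁ ≥ y₂ ≥ ... ≥ yₙ ≥ 0 and 0 = t₀ ≤ t₁ ≤ ... ≤ tₙ. Let A = ∑_{i=1}^n yᵢ(tᵢ - tᵢ₋₁). Then ∑_{i=1}^n (tᵢ₋₁yᵢ·ln(tᵢ₋₁yᵢ) - tᵢyᵢ·ln(tᵢyᵢ)) ≥ -A·ln A. -/
/-!
Put `φ x = x log x`, which is convex on `[0, ∞)`, and let `Sₘ = ∑_{i ≤ m} yᵢ (tᵢ - tᵢ₋₁)`, so that
`S₀ = 0` and `Sₙ = A`. Since `y` is decreasing, `tₘ yₘ = ∑_{i ≤ m} yₘ (tᵢ - tᵢ₋₁) ≤ Sₘ`. Hence the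
interval `[tᵢ₋₁ yᵢ, tᵢ yᵢ]` has the same length as `[Sᵢ₋₁, Sᵢ]` and lies to its left, so by convexity
`φ (tᵢ yᵢ) - φ (tᵢ₋₁ yᵢ) ≤ φ Sᵢ - φ Sᵢ₋₁`. Summing over `i` telescopes the right-hand side to `φ A`.
-/

open Finset Real

section ConvexIncrement

variable {𝕜 : Type*} [Field 𝕜] [LinearOrder 𝕜] [IsStrictOrderedRing 𝕜] {s : Set 𝕜} {f : 𝕜 → 𝕜}
  {a b c d : 𝕜}

lemma ConvexOn.slope_le_slope (hf : ConvexOn 𝕜 s f) (ha : a ∈ s) (hd : d ∈ s) (hab : a < b)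
    (hcd : c < d) (hac : a ≤ c) (hbd : b ≤ d) : slope f a b ≤ slope f c d := by
  have hb : b ∈ s := hf.1.ordConnected.out ha hd ⟨hab.le, hbd⟩
  have hc : c ∈ s := hf.1.ordConnected.out ha hd ⟨hac, hcd.le⟩
  have had : a < d := hab.trans_le hbd
  calc slope f a b ≤ slope f a d := hf.slope_mono ha ⟨hb, hab.ne'⟩ ⟨hd, had.ne'⟩ hbd
    _ = slope f d a := slope_comm f a d
    _ ≤ slope f d c := hf.slope_mono hd ⟨ha, had.ne⟩ ⟨hc, hcd.ne⟩ hac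
    _ = slope f c d := slope_comm f d c

lemma ConvexOn.sub_le_sub_of_sub_eq (hf : ConvexOn 𝕜 s f) (ha : a ∈ s) (hd : d ∈ s) (hab : a ≤ b)
    (hbd : b ≤ d) (h : b - a = d - c) : f b - f a ≤ f d - f c := by
  rcases hab.eq_or_lt with rfl | hab
  · obtain rfl : c = d := by linarith
    simp
  · have hslope := hf.slope_le_slope ha hd hab (by linarith) (by linarith) hbd
    rw [slope_def_field, slope_def_field, ← h] at hslope
    exact (div_le_div_iff_of_pos_right (sub_pos.2 hab)).1 hslope

end ConvexIncrement

lemma Finset.sum_Icc_one_sub_pred {M : Type*} [AddCommGroup M] (f : ℕ → M) (n : ℕ) :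
    ∑ i ∈ Icc 1 n, (f i - f (i - 1)) = f n - f 0 := by
  induction n with
  | zero => simp
  | succ n ih =>
    rw [sum_Icc_succ_top (by omega), ih, Nat.add_sub_cancel]
    abel

/-- The integral over `[0, tₘ]` of the step function equal to `yᵢ` on `(tᵢ₋₁, tᵢ]`. -/
def stepSum (y t : ℕ → ℝ) (m : ℕ) : ℝ := ∑ i ∈ Icc 1 m, y i * (t i - t (i - 1))

section StepSum

variable {y t : ℕ → ℝ}

lemma stepSum_succ (j : ℕ) :
    stepSum y t (j + 1) = stepSum y t j + y (j + 1) * (t (j + 1) - t j) := by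
  rw [stepSum, sum_Icc_succ_top (by omega), Nat.add_sub_cancel, stepSum]

lemma mul_le_stepSum {m : ℕ} (ht0 : t 0 = 0) (ht : MonotoneOn t (Set.Iic m))
    (hy : AntitoneOn y (Set.Icc 1 m)) : t m * y m ≤ stepSum y t m :=
  calc t m * y m = ∑ i ∈ Icc 1 m, y m * (t i - t (i - 1)) := by
        rw [← mul_sum, sum_Icc_one_sub_pred, ht0, sub_zero, mul_comm]
    _ ≤ _ := sum_le_sum fun i hi ↦ by
      obtain ⟨hi1, him⟩ := mem_Icc.1 hi
      exact mul_le_mul_of_nonneg_right (hy (by simp; omega) (by simp; omega) him)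
        (sub_nonneg.2 (ht (by simp; omega) (by simp; omega) (Nat.sub_le i 1)))

lemma mul_log_sub_le_stepSum {j : ℕ} (ht0 : t 0 = 0) (ht : MonotoneOn t (Set.Iic (j + 1)))
    (hy : AntitoneOn y (Set.Icc 1 (j + 1))) (hyj : 0 ≤ y (j + 1)) :
    t (j + 1) * y (j + 1) * log (t (j + 1) * y (j + 1)) - t j * y (j + 1) * log (t j * y (j + 1))
      ≤ stepSum y t (j + 1) * log (stepSum y t (j + 1)) - stepSum y t j * log (stepSum y t j) := by
  have htj : 0 ≤ t j := ht0 ▸ ht (by simp) (by simp) (Nat.zero_le j)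
  have hab : t j * y (j + 1) ≤ t (j + 1) * y (j + 1) :=
    mul_le_mul_of_nonneg_right (ht (by simp) (by simp) j.le_succ) hyj
  have ha : 0 ≤ t j * y (j + 1) := mul_nonneg htj hyj
  have hbd := mul_le_stepSum ht0 ht hy
  exact convexOn_mul_log.sub_le_sub_of_sub_eq ha (ha.trans (hab.trans hbd)) hab hbd
    (by rw [stepSum_succ]; ring)

end StepSum

/-- Suppose `y₁ ≥ y₂ ≥ ... ≥ yₙ ≥ 0` and `0 = t₀ ≤ t₁ ≤ ... ≤ tₙ`, and let
`A = ∑ yᵢ (tᵢ - tᵢ₋₁)`.  Then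
`∑ (tᵢ₋₁ yᵢ ln(tᵢ₋₁ yᵢ) - tᵢ yᵢ ln(tᵢ yᵢ)) ≥ -A ln A`
(with the convention `0 ln 0 = 0`, which holds since `Real.log 0 = 0`). -/
theorem step_entropy_inequality (n : ℕ) (y t : ℕ → ℝ)
    (hy_mono : ∀ i, 1 ≤ i → i < n → y (i + 1) ≤ y i)
    (hy_nonneg : ∀ i, 1 ≤ i → i ≤ n → 0 ≤ y i)
    (ht0 : t 0 = 0)
    (ht_mono : ∀ i, i < n → t i ≤ t (i + 1))
    (A : ℝ) (hA : A = ∑ i ∈ Finset.Icc 1 n, y i * (t i - t (i - 1))) :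
    -A * Real.log A ≤
      ∑ i ∈ Finset.Icc 1 n,
        (t (i - 1) * y i * Real.log (t (i - 1) * y i) -
          t i * y i * Real.log (t i * y i)) := by
  set φ : ℝ → ℝ := fun x ↦ x * log x
  have ht : MonotoneOn t (Set.Iic n) :=
    monotoneOn_of_le_add_one Set.ordConnected_Iic fun i _ _ hi ↦ ht_mono i hi
  have hy : AntitoneOn y (Set.Icc 1 n) :=
    antitoneOn_of_add_one_le Set.ordConnected_Icc fun i _ hi hi' ↦ hy_mono i hi.1 hi'.2
  have hstep : ∀ i ∈ Icc 1 n, φ (t i * y i) - φ (t (i - 1) * y i) ≤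
      φ (stepSum y t i) - φ (stepSum y t (i - 1)) := by
    intro i hi
    obtain ⟨hi1, hin⟩ := mem_Icc.1 hi
    obtain ⟨j, rfl⟩ : ∃ j, i = j + 1 := ⟨i - 1, by omega⟩
    rw [Nat.add_sub_cancel]
    exact mul_log_sub_le_stepSum ht0 (ht.mono (Set.Iic_subset_Iic.2 hin))
      (hy.mono (Set.Icc_subset_Icc_right hin)) (hy_nonneg _ hi1 hin)
  calc -A * log A = -(φ (stepSum y t n) - φ (stepSum y t 0)) := by simp [φ, stepSum, hA]
    _ = ∑ i ∈ Icc 1 n, -(φ (stepSum y t i) - φ (stepSum y t (i - 1))) := by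
      rw [sum_neg_distrib, sum_Icc_one_sub_pred fun i ↦ φ (stepSum y t i)]
    _ ≤ _ := sum_le_sum fun i hi ↦ by linarith [hstep i hi]
end

section
/- The vector (A, y₂t₁, y₃t₂, ..., yₙtₙ₋₁) majorizes the vector (y₁t₁, y₂t₂, ..., yₙtₙ), where y₁ ≥ y₂ ≥ ... ≥ yₙ ≥ 0, 0 = t₀ ≤ t₁ ≤ ... ≤ tₙ, and A = ∑_{i=1}^n yᵢ(tᵢ - tᵢ₋₁). -/
open Finset

/-- `a` majorizes `b`: the sum of the `k` largest entries of `a` dominates that of `b`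
for every `k` (equivalently, every partial sum of `b`-entries is dominated by some
equal-sized partial sum of `a`-entries), and the total sums are equal. -/
def Majorizes {n : ℕ} (a b : Fin n → ℝ) : Prop :=
  (∀ s : Finset (Fin n), ∃ s' : Finset (Fin n), s'.card = s.card ∧
      ∑ i ∈ s, b i ≤ ∑ i ∈ s', a i) ∧
    ∑ i, a i = ∑ i, b i

/-!
Write `Aₘ = ∑_{1 ≤ j ≤ m} yⱼ (tⱼ - tⱼ₋₁)`, so `A = Aₙ`. Abel summation (with `t₀ = 0`) gives
`Aₘ₊₁ = yₘ₊₁ tₘ₊₁ + ∑_{1 ≤ j ≤ m} (yⱼ - yⱼ₊₁) tⱼ`; for `m + 1 = n` this is the equality of the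
total sums. Indexing both vectors from `0`, a set `s` of indices with largest element `m` is
matched by `{0} ∪ ((s \ {m}) + 1)`: entry `i ∈ s \ {m}` of the second vector exceeds entry
`i + 1` of the first by the gap `(yᵢ₊₁ - yᵢ₊₂) tᵢ₊₁ ≥ 0`, and entry `m` plus all these gaps
is at most `Aₘ₊₁ ≤ A`.
-/

section StepData

variable {y t : ℕ → ℝ}

theorem sum_Icc_mul_sub_eq (ht0 : t 0 = 0) (m : ℕ) :
    ∑ j ∈ Icc 1 (m + 1), y j * (t j - t (j - 1)) =
      y (m + 1) * t (m + 1) + ∑ i ∈ range m, (y (i + 1) - y (i + 2)) * t (i + 1) := by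
  induction m with
  | zero => simp [ht0]
  | succ k ih =>
    rw [sum_Icc_succ_top (by omega), ih, sum_range_succ]
    simp only [Nat.add_sub_cancel]
    ring

theorem nonneg_of_zero_of_le_succ {n : ℕ} (ht0 : t 0 = 0)
    (ht_mono : ∀ i, i < n → t i ≤ t (i + 1)) {j : ℕ} (hj : j ≤ n) : 0 ≤ t j := by
  induction j with
  | zero => exact ht0.ge
  | succ k ih => exact (ih (by omega)).trans (ht_mono k (by omega))

theorem sum_Icc_mul_sub_mono {n m : ℕ} (hy_nonneg : ∀ i, 1 ≤ i → i ≤ n → 0 ≤ y i)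
    (ht_mono : ∀ i, i < n → t i ≤ t (i + 1)) (hmn : m ≤ n) :
    ∑ j ∈ Icc 1 m, y j * (t j - t (j - 1)) ≤ ∑ j ∈ Icc 1 n, y j * (t j - t (j - 1)) := by
  refine sum_le_sum_of_subset_of_nonneg (Icc_subset_Icc_right hmn) fun j hj _ => ?_
  obtain ⟨hj1, hjn⟩ := mem_Icc.mp hj
  have ht : t (j - 1) ≤ t j := by
    simpa [Nat.sub_add_cancel hj1] using ht_mono (j - 1) (by omega)
  exact mul_nonneg (hy_nonneg j hj1 hjn) (sub_nonneg.mpr ht)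

theorem add_sum_le_sum_Icc_add_sum {n m : ℕ} {s : Finset ℕ}
    (hy_mono : ∀ i, 1 ≤ i → i < n → y (i + 1) ≤ y i)
    (hy_nonneg : ∀ i, 1 ≤ i → i ≤ n → 0 ≤ y i)
    (ht0 : t 0 = 0) (ht_mono : ∀ i, i < n → t i ≤ t (i + 1))
    (hmn : m < n) (hsm : s ⊆ range m) :
    y (m + 1) * t (m + 1) + ∑ i ∈ s, y (i + 1) * t (i + 1) ≤
      ∑ j ∈ Icc 1 n, y j * (t j - t (j - 1)) + ∑ i ∈ s, y (i + 2) * t (i + 1) := by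
  have hgaps : ∑ i ∈ s, (y (i + 1) - y (i + 2)) * t (i + 1) ≤
      ∑ i ∈ range m, (y (i + 1) - y (i + 2)) * t (i + 1) := by
    refine sum_le_sum_of_subset_of_nonneg hsm fun i hi _ => ?_
    have him := mem_range.mp hi
    exact mul_nonneg (sub_nonneg.mpr (hy_mono (i + 1) (by omega) (by omega)))
      (nonneg_of_zero_of_le_succ ht0 ht_mono (by omega))
  have hpartial := sum_Icc_mul_sub_mono hy_nonneg ht_mono (Nat.succ_le_of_lt hmn)
  rw [sum_Icc_mul_sub_eq ht0] at hpartial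
  have hsplit : ∑ i ∈ s, (y (i + 1) - y (i + 2)) * t (i + 1) =
      ∑ i ∈ s, y (i + 1) * t (i + 1) - ∑ i ∈ s, y (i + 2) * t (i + 1) := by
    rw [← sum_sub_distrib]
    exact sum_congr rfl fun i _ => by ring
  linarith

theorem exists_card_eq_sum_le_sum_ite {n : ℕ} {A : ℝ}
    (hy_mono : ∀ i, 1 ≤ i → i < n → y (i + 1) ≤ y i)
    (hy_nonneg : ∀ i, 1 ≤ i → i ≤ n → 0 ≤ y i)
    (ht0 : t 0 = 0) (ht_mono : ∀ i, i < n → t i ≤ t (i + 1))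
    (hA : ∑ j ∈ Icc 1 n, y j * (t j - t (j - 1)) ≤ A) (s : Finset ℕ) (hs : ∀ i ∈ s, i < n) :
    ∃ s' : Finset ℕ, ∃ _ : ∀ i ∈ s', i < n, s'.card = s.card ∧
      ∑ i ∈ s, y (i + 1) * t (i + 1) ≤ ∑ i ∈ s', if i = 0 then A else y (i + 1) * t i := by
  rcases s.eq_empty_or_nonempty with rfl | hne
  · exact ⟨∅, by simp, rfl, by simp⟩
  set m := s.max' hne
  have hm : m ∈ s := s.max'_mem hne
  have hsm : s.erase m ⊆ range m := fun i hi =>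
    mem_range.mpr ((s.le_max' i (mem_of_mem_erase hi)).lt_of_ne (ne_of_mem_erase hi))
  have h0 : 0 ∉ (s.erase m).map (addRightEmbedding 1) := by simp
  refine ⟨insert 0 ((s.erase m).map (addRightEmbedding 1)), ?_, ?_, ?_⟩
  · simp only [mem_insert, mem_map, addRightEmbedding_apply]
    rintro _ (rfl | ⟨i, hi, rfl⟩)
    · exact (Nat.zero_le m).trans_lt (hs m hm)
    · exact (Nat.succ_le_of_lt (mem_range.mp (hsm hi))).trans_lt (hs m hm)
  · rw [card_insert_of_notMem h0, card_map, card_erase_of_mem hm,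
      Nat.sub_add_cancel (card_pos.mpr hne)]
  · rw [sum_insert h0, sum_map, if_pos rfl, ← add_sum_erase s _ hm]
    simp only [addRightEmbedding_apply, Nat.add_one_ne_zero, if_false]
    linarith [add_sum_le_sum_Icc_add_sum hy_mono hy_nonneg ht0 ht_mono (hs m hm) hsm]

theorem sum_range_ite_eq_sum_range {n : ℕ} {A : ℝ} (ht0 : t 0 = 0)
    (hA : A = ∑ j ∈ Icc 1 n, y j * (t j - t (j - 1))) :
    ∑ i ∈ range n, (if i = 0 then A else y (i + 1) * t i) =
      ∑ i ∈ range n, y (i + 1) * t (i + 1) := by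
  cases n with
  | zero => simp
  | succ k =>
    rw [sum_range_succ', sum_range_succ, if_pos rfl, hA, sum_Icc_mul_sub_eq ht0]
    simp only [Nat.add_one_ne_zero, if_false, sub_mul, sum_sub_distrib]
    ring

end StepData

theorem majorizes_of_nat {n : ℕ} (a b : ℕ → ℝ)
    (hsub : ∀ s : Finset ℕ, (∀ i ∈ s, i < n) → ∃ s' : Finset ℕ, ∃ _ : ∀ i ∈ s', i < n,
      s'.card = s.card ∧ ∑ i ∈ s, b i ≤ ∑ i ∈ s', a i)
    (hsum : ∑ i ∈ range n, a i = ∑ i ∈ range n, b i) :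
    Majorizes (fun i : Fin n => a i) (fun i : Fin n => b i) := by
  refine ⟨fun s => ?_, ?_⟩
  · obtain ⟨s', hs', hcard, hle⟩ :=
      hsub (s.map Fin.valEmbedding) fun i hi => by
        obtain ⟨j, -, rfl⟩ := mem_map.mp hi
        exact j.isLt
    refine ⟨s'.attachFin hs', by rw [card_attachFin, hcard, card_map], ?_⟩
    calc ∑ i ∈ s, b i = ∑ i ∈ s.map Fin.valEmbedding, b i := (sum_map s Fin.valEmbedding b).symm
      _ ≤ ∑ i ∈ s', a i := hle
      _ = ∑ i ∈ (s'.attachFin hs').map Fin.valEmbedding, a i := by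
        rw [map_valEmbedding_attachFin]
      _ = ∑ i ∈ s'.attachFin hs', a i := sum_map _ Fin.valEmbedding a
  · simpa only [Fin.sum_univ_eq_sum_range] using hsum

/-- With `y₁ ≥ ... ≥ yₙ ≥ 0`, `0 = t₀ ≤ t₁ ≤ ... ≤ tₙ` and
`A = ∑ yᵢ (tᵢ - tᵢ₋₁)`, the vector `(A, y₂t₁, y₃t₂, ..., yₙtₙ₋₁)` majorizes the
vector `(y₁t₁, y₂t₂, ..., yₙtₙ)`. -/
theorem majorization_of_step_data (n : ℕ) (y t : ℕ → ℝ)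
    (hy_mono : ∀ i, 1 ≤ i → i < n → y (i + 1) ≤ y i)
    (hy_nonneg : ∀ i, 1 ≤ i → i ≤ n → 0 ≤ y i)
    (ht0 : t 0 = 0)
    (ht_mono : ∀ i, i < n → t i ≤ t (i + 1))
    (A : ℝ) (hA : A = ∑ i ∈ Finset.Icc 1 n, y i * (t i - t (i - 1))) :
    Majorizes (fun i : Fin n => if (i : ℕ) = 0 then A else y ((i : ℕ) + 1) * t (i : ℕ))
      (fun i : Fin n => y ((i : ℕ) + 1) * t ((i : ℕ) + 1)) :=
  majorizes_of_nat (fun i => if i = 0 then A else y (i + 1) * t i) (fun i => y (i + 1) * t (i + 1))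
    (exists_card_eq_sum_le_sum_ite hy_mono hy_nonneg ht0 ht_mono hA.ge)
    (sum_range_ite_eq_sum_range ht0 hA)
end

section
/- Let f be a positive monotone decreasing function on [a,b] with 0 < a < b. Let P = a·f(a) and Q = ∫ₐ^b f dx. Then -∫ₐ^b f·(1 + ln(x·f(x))) dx ≥ P·ln P - (P+Q)·ln(P+Q). -/
open MeasureTheory intervalIntegral Real Set

/-!
Extend `f` to an antitone function on `ℝ` and put `F x = P + ∫ₐˣ f`. Since `f` decreases,
`x f(x) = a f(x) + (x - a) f(x) ≤ a f(a) + ∫ₐˣ f = F x`, so the integrand is at most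
`f (1 + log F) = (F log F)'`. The derivative identity holds off the countably many
discontinuities of `f`, which is enough for the fundamental theorem of calculus, and integrating
gives `∫ₐᵇ f (1 + log (x f)) ≤ (P + Q) log (P + Q) - P log P`.
-/

theorem Antitone.mul_le_add_integral {g : ℝ → ℝ} (hg : Antitone g) {a x : ℝ} (ha : 0 ≤ a)
    (hax : a ≤ x) : x * g x ≤ a * g a + ∫ t in a..x, g t := by
  have hleft : a * g x ≤ a * g a := mul_le_mul_of_nonneg_left (hg hax) ha
  have hright : (x - a) * g x ≤ ∫ t in a..x, g t := by
    simpa using integral_mono_on (μ := volume) hax intervalIntegrable_const hg.intervalIntegrable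
      fun t ht => hg ht.2
  linarith

theorem Antitone.mul_add_integral_pos {g : ℝ → ℝ} (hg : Antitone g) {a x : ℝ} (ha : 0 < a)
    (hax : a ≤ x) (hgx : 0 < g x) : 0 < a * g a + ∫ t in a..x, g t :=
  (mul_pos (ha.trans_le hax) hgx).trans_le (hg.mul_le_add_integral ha.le hax)

theorem Antitone.intervalIntegrable_mul_one_add_log_primitive {g : ℝ → ℝ} (hg : Antitone g)
    {a b c : ℝ} (hab : a ≤ b) (hF : ∀ x ∈ Icc a b, 0 < c + ∫ t in a..x, g t) :
    IntervalIntegrable (fun x => g x * (1 + log (c + ∫ t in a..x, g t))) volume a b := by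
  have hF_cont : Continuous fun x => c + ∫ t in a..x, g t :=
    continuous_const.add (continuous_primitive (fun _ _ => hg.intervalIntegrable) a)
  refine hg.intervalIntegrable.mul_continuousOn
    (continuousOn_const.add (hF_cont.continuousOn.log fun x hx => ?_))
  exact (hF x (uIcc_of_le hab ▸ hx)).ne'

theorem Antitone.integral_mul_one_add_log_primitive {g : ℝ → ℝ} (hg : Antitone g) {a b c : ℝ}
    (hab : a ≤ b) (hF : ∀ x ∈ Icc a b, 0 < c + ∫ t in a..x, g t) :
    ∫ x in a..b, g x * (1 + log (c + ∫ t in a..x, g t)) =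
      (c + ∫ x in a..b, g x) * log (c + ∫ x in a..b, g x) - c * log c := by
  set F : ℝ → ℝ := fun x => c + ∫ t in a..x, g t
  have hF_cont : Continuous F :=
    continuous_const.add (continuous_primitive (fun _ _ => hg.intervalIntegrable) a)
  have hFTC := integral_eq_of_hasDerivAt_off_countable_of_le (fun x => F x * log (F x))
    (fun x => g x * (1 + log (F x))) hab hg.countable_not_continuousAt
    (hF_cont.continuousOn.mul (hF_cont.continuousOn.log fun x hx => (hF x hx).ne'))
    ?_ (hg.intervalIntegrable_mul_one_add_log_primitive hab hF)
  · simpa [F] using hFTC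
  · rintro x ⟨hx, hcont⟩
    have hF_deriv : HasDerivAt F (g x) x :=
      (integral_hasDerivAt_right hg.intervalIntegrable
        hg.measurable.stronglyMeasurable.stronglyMeasurableAtFilter (not_not.1 hcont)).const_add c
    have hFx : F x ≠ 0 := (hF x (Ioo_subset_Icc_self hx)).ne'
    refine ((hasDerivAt_mul_log hFx).comp x hF_deriv).congr_deriv ?_
    ring

theorem Antitone.integral_mul_one_add_log_mul_le {g : ℝ → ℝ} (hg : Antitone g) {a b : ℝ}
    (ha : 0 < a) (hab : a ≤ b) (hg_pos : ∀ x ∈ Icc a b, 0 < g x) :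
    ∫ x in a..b, g x * (1 + log (x * g x)) ≤
      ∫ x in a..b, g x * (1 + log (a * g a + ∫ t in a..x, g t)) := by
  have hF : ∀ x ∈ Icc a b, 0 < a * g a + ∫ t in a..x, g t := fun x hx =>
    hg.mul_add_integral_pos ha hx.1 (hg_pos x hx)
  have hgb : 0 < g b := hg_pos b ⟨hab, le_rfl⟩
  have hlower : ∀ x ∈ Icc a b,
      g x * (1 + log (a * g b)) ≤ g x * (1 + log (x * g x)) := fun x hx =>
    mul_le_mul_of_nonneg_left (add_le_add_right (log_le_log (mul_pos ha hgb)
      (mul_le_mul hx.1 (hg hx.2) hgb.le (ha.trans_le hx.1).le)) 1) (hg_pos x hx).le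
  have hupper : ∀ x ∈ Icc a b, g x * (1 + log (x * g x)) ≤
      g x * (1 + log (a * g a + ∫ t in a..x, g t)) := fun x hx => by
    gcongr
    · exact (hg_pos x hx).le
    · exact mul_pos (ha.trans_le hx.1) (hg_pos x hx)
    · exact hg.mul_le_add_integral ha.le hx.1
  have hupper_int := hg.intervalIntegrable_mul_one_add_log_primitive hab hF
  have hint : IntervalIntegrable (fun x => g x * (1 + log (x * g x))) volume a b := by
    have hg_meas := hg.measurable
    rw [intervalIntegrable_iff_integrableOn_Ioc_of_le hab]
    have hIoc : ∀ᵐ x ∂volume.restrict (Ioc a b), x ∈ Icc a b :=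
      (ae_restrict_mem measurableSet_Ioc).mono fun x hx => Ioc_subset_Icc_self hx
    exact integrable_of_le_of_le (by fun_prop) (hIoc.mono hlower) (hIoc.mono hupper)
      (hg.intervalIntegrable.mul_const _).1 hupper_int.1
  exact integral_mono_on hab hint hupper_int hupper

/-- Let `f` be positive and monotone decreasing on `[a,b]` with `0 < a < b`, and set
`P = a f(a)` and `Q = ∫ₐᵇ f`.  Then
`-∫ₐᵇ f (1 + ln(x f(x))) dx ≥ P ln P - (P+Q) ln(P+Q)`. -/
theorem corner_integral_lower_bound (a b : ℝ) (ha : 0 < a) (hab : a < b)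
    (f : ℝ → ℝ) (hf_pos : ∀ x ∈ Set.Icc a b, 0 < f x)
    (hf_mono : AntitoneOn f (Set.Icc a b))
    (P Q : ℝ) (hP : P = a * f a) (hQ : Q = ∫ x in a..b, f x) :
    P * Real.log P - (P + Q) * Real.log (P + Q) ≤
      -∫ x in a..b, f x * (1 + Real.log (x * f x)) := by
  have hmem_a : a ∈ Icc a b := ⟨le_rfl, hab.le⟩
  obtain ⟨g, hg, hfg⟩ := hf_mono.exists_antitone_extension
    ⟨0, by rintro _ ⟨x, hx, rfl⟩; exact (hf_pos x hx).le⟩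
    ⟨f a, by rintro _ ⟨x, hx, rfl⟩; exact hf_mono hmem_a hx hx.1⟩
  have hEq : EqOn f g (uIcc a b) := by rwa [uIcc_of_le hab.le]
  rw [integral_congr hEq] at hQ
  have hintegrand : ∫ x in a..b, f x * (1 + log (x * f x)) =
      ∫ x in a..b, g x * (1 + log (x * g x)) := integral_congr fun x hx => by simp only [hEq hx]
  rw [hintegrand, hP, hfg hmem_a]
  have hg_pos : ∀ x ∈ Icc a b, 0 < g x := fun x hx => hfg hx ▸ hf_pos x hx
  have hbound := hg.integral_mul_one_add_log_mul_le ha hab.le hg_pos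
  rw [hg.integral_mul_one_add_log_primitive hab.le fun x hx =>
    hg.mul_add_integral_pos ha hx.1 (hg_pos x hx)] at hbound
  rw [hQ]
  linarith
end

section
/- Let f: (0,b) → (0,∞) be monotone decreasing with ∫₀^b f(x)^s dx < ∞ for some s > 0. Then the slide function σ_f(t) = -1 - ∫₀^b (f(x)^t/A(t))·ln(x·f(x)^t/A(t)) dx, where A(t) = ∫₀^b f(x)^t dx, is defined (finite) for all t ∈ [0, s/2] and is continuous from the right at t = 0 with σ_f(0) = 0. -/
open MeasureTheory Real

/-- `A(t) = ∫₀ᵇ f(x)^t dx`. -/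
noncomputable def slideA (b : ℝ) (f : ℝ → ℝ) (t : ℝ) : ℝ :=
  ∫ x in Set.Ioo 0 b, f x ^ t

/-- The slide function `σ_f(t) = -1 - ∫₀ᵇ (f^t/A(t)) ln(x f^t/A(t)) dx`. -/
noncomputable def slideFun (b : ℝ) (f : ℝ → ℝ) (t : ℝ) : ℝ :=
  -1 - ∫ x in Set.Ioo 0 b,
    (f x ^ t / slideA b f t) * Real.log (x * (f x ^ t / slideA b f t))

/-! Write the integrand as `(f^t/A(t)) (log x + log f^t - log A(t))`. For `0 ≤ t ≤ s/2`,
AM–GM gives `f^{s/2} |log x| ≤ (f^s + log² x)/2`, and `u |log u| ≤ 1 + u²` with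
`u² = f^{2t} ≤ 1 + f^s`, so the integrand is dominated, uniformly in `t`, by a combination
of `1`, `f^s` and `log² x`, all integrable on `(0, b)`. Since `t ↦ A(t)` is continuous and
positive on the compact `[0, s]`, `A(t)⁻¹` and `|log A(t)|` are bounded there. Dominated
convergence then makes `σ_f` continuous on `[0, s/2]`, and
`σ_f(0) = -1 - (1/b) ∫₀ᵇ log(x/b) dx = 0`. -/

open Set

namespace Real

lemma rpow_le_one_add_rpow {y t s : ℝ} (hy : 0 ≤ y) (ht : 0 ≤ t) (hts : t ≤ s) :
    y ^ t ≤ 1 + y ^ s := by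
  rcases le_total y 1 with h | h
  · linarith [rpow_le_one hy h ht, rpow_nonneg hy s]
  · linarith [rpow_le_rpow_of_exponent_le h hts]

lemma mul_abs_log_le_one_add_sq {u : ℝ} (hu : 0 ≤ u) : u * |log u| ≤ 1 + u ^ 2 := by
  rcases hu.eq_or_lt with rfl | hu
  · simp
  rcases le_total u 1 with h | h
  · have := abs_log_mul_self_lt u hu h
    rw [abs_mul, abs_of_pos hu] at this
    nlinarith
  · rw [abs_of_nonneg (log_nonneg h)]
    nlinarith [log_le_sub_one_of_pos hu]

lemma log_sq_le {x b : ℝ} (hx : 0 < x) (hxb : x ≤ b) :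
    log x ^ 2 ≤ 16 * x ^ (-(1 / 2) : ℝ) + log b ^ 2 := by
  rcases le_total x 1 with h | h
  · set v := x ^ (-(1 / 4) : ℝ)
    have hv : 1 ≤ v := one_le_rpow_of_pos_of_le_one_of_nonpos hx h (by norm_num)
    have hlog : log x = -4 * log v := by rw [log_rpow hx]; ring
    have hsq : v ^ 2 = x ^ (-(1 / 2) : ℝ) := by
      rw [← rpow_natCast, ← rpow_mul hx.le]; norm_num
    have h0 := log_nonneg hv
    have h1 : log v ≤ v := by linarith [log_le_sub_one_of_pos (by linarith : 0 < v)]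
    nlinarith [sq_nonneg (log b)]
  · have h0 := log_nonneg h
    have h1 := log_le_log hx hxb
    nlinarith [rpow_nonneg hx.le (-(1 / 2) : ℝ)]

lemma integrableOn_log_sq {b : ℝ} (hb : 0 < b) :
    IntegrableOn (fun x => log x ^ 2) (Ioo 0 b) := by
  have hbound : IntegrableOn (fun x : ℝ => 16 * x ^ (-(1 / 2) : ℝ) + log b ^ 2) (Ioo 0 b) :=
    (((intervalIntegral.integrableOn_Ioo_rpow_iff hb).2 (by norm_num)).const_mul 16).add
      (integrableOn_const measure_Ioo_lt_top.ne)
  refine hbound.mono' (measurable_log.pow_const 2).aestronglyMeasurable ?_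
  filter_upwards [ae_restrict_mem measurableSet_Ioo] with x hx
  rw [norm_of_nonneg (sq_nonneg _)]
  exact log_sq_le hx.1 hx.2.le

lemma abs_rpow_div_mul_log_le {x y t s A : ℝ} (hx : 0 < x) (hy : 0 < y) (ht : 0 ≤ t)
    (hts : 2 * t ≤ s) (hA : 0 < A) :
    |y ^ t / A * log (x * (y ^ t / A))| ≤ A⁻¹ * (log x ^ 2 + (1 + y ^ s) * (3 + |log A|)) := by
  have hu : 0 < y ^ t := rpow_pos_of_pos hy t
  have hys : 0 ≤ y ^ s := rpow_nonneg hy.le s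
  have hsplit : log (x * (y ^ t / A)) = log x + log (y ^ t) - log A := by
    rw [log_mul hx.ne' (by positivity), log_div hu.ne' hA.ne']; ring
  have habs : |log (x * (y ^ t / A))| ≤ |log x| + |log (y ^ t)| + |log A| := by
    rw [hsplit]; exact (abs_sub _ _).trans (by gcongr; exact abs_add_le _ _)
  have hlogx : y ^ t * |log x| ≤ log x ^ 2 + (1 + y ^ s) := by
    have hhalf : y ^ t ≤ 1 + y ^ (s / 2) := rpow_le_one_add_rpow hy.le ht (by linarith)
    have hsq : (y ^ (s / 2)) ^ 2 = y ^ s := by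
      rw [← rpow_natCast, ← rpow_mul hy.le]; norm_num
    -- `(1 + u) |L| ≤ (1 + L²)/2 + (u² + L²)/2` with `u = y^(s/2)`
    rw [← sq_abs (log x)]
    nlinarith [sq_nonneg (|log x| - 1), sq_nonneg (y ^ (s / 2) - |log x|),
      abs_nonneg (log x), rpow_nonneg hy.le (s / 2)]
  have hlogy : y ^ t * |log (y ^ t)| ≤ 2 * (1 + y ^ s) := by
    have hsq : (y ^ t) ^ 2 ≤ 1 + y ^ s := by
      rw [← rpow_natCast, ← rpow_mul hy.le]
      exact rpow_le_one_add_rpow hy.le (by positivity) (by push_cast; linarith)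
    linarith [mul_abs_log_le_one_add_sq hu.le]
  have hlogA : y ^ t * |log A| ≤ (1 + y ^ s) * |log A| :=
    mul_le_mul_of_nonneg_right (rpow_le_one_add_rpow hy.le ht (by linarith)) (abs_nonneg _)
  rw [abs_mul, abs_of_pos (by positivity : 0 < y ^ t / A), div_eq_inv_mul, mul_assoc]
  gcongr
  calc y ^ t * |log (x * (A⁻¹ * y ^ t))|
      ≤ y ^ t * (|log x| + |log (y ^ t)| + |log A|) := by
        rw [← div_eq_inv_mul]; gcongr
    _ ≤ log x ^ 2 + (1 + y ^ s) * (3 + |log A|) := by nlinarith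

end Real

section SlideFunction

variable {b s : ℝ} {f : ℝ → ℝ}

lemma integrableOn_rpow_of_le (hf : AEMeasurable f (volume.restrict (Ioo 0 b)))
    (hf_pos : ∀ x ∈ Ioo 0 b, 0 < f x) (hint : IntegrableOn (fun x => f x ^ s) (Ioo 0 b))
    {t : ℝ} (ht : 0 ≤ t) (hts : t ≤ s) : IntegrableOn (fun x => f x ^ t) (Ioo 0 b) := by
  refine ((integrableOn_const (C := (1 : ℝ)) measure_Ioo_lt_top.ne).add hint).mono'
    (hf.pow_const t).aestronglyMeasurable ?_
  filter_upwards [ae_restrict_mem measurableSet_Ioo] with x hx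
  rw [norm_of_nonneg (rpow_nonneg (hf_pos x hx).le t)]
  exact rpow_le_one_add_rpow (hf_pos x hx).le ht hts

lemma slideA_zero (hb : 0 ≤ b) : slideA b f 0 = b := by
  simp [slideA, hb]

lemma slideA_pos (hb : 0 < b) (hf : AEMeasurable f (volume.restrict (Ioo 0 b)))
    (hf_pos : ∀ x ∈ Ioo 0 b, 0 < f x) (hint : IntegrableOn (fun x => f x ^ s) (Ioo 0 b))
    {t : ℝ} (ht : t ∈ Icc 0 s) : 0 < slideA b f t := by
  rw [slideA, setIntegral_pos_iff_support_of_nonneg_ae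
    ((ae_restrict_mem measurableSet_Ioo).mono fun x hx => (rpow_pos_of_pos (hf_pos x hx) t).le)
    (integrableOn_rpow_of_le hf hf_pos hint ht.1 ht.2)]
  have hsupp : Ioo 0 b ⊆ Function.support (fun x => f x ^ t) ∩ Ioo 0 b :=
    fun x hx => ⟨(rpow_pos_of_pos (hf_pos x hx) t).ne', hx⟩
  exact (by simpa using hb : 0 < volume (Ioo 0 b)).trans_le (measure_mono hsupp)

lemma continuousOn_slideA (hf : AEMeasurable f (volume.restrict (Ioo 0 b)))
    (hf_pos : ∀ x ∈ Ioo 0 b, 0 < f x) (hint : IntegrableOn (fun x => f x ^ s) (Ioo 0 b)) :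
    ContinuousOn (slideA b f) (Icc 0 s) := by
  refine continuousOn_of_dominated (bound := fun x => 1 + f x ^ s)
    (fun t _ => (hf.pow_const t).aestronglyMeasurable) (fun t ht => ?_)
    ((integrableOn_const (C := (1 : ℝ)) measure_Ioo_lt_top.ne).add hint) ?_
  · filter_upwards [ae_restrict_mem measurableSet_Ioo] with x hx
    rw [norm_of_nonneg (rpow_nonneg (hf_pos x hx).le t)]
    exact rpow_le_one_add_rpow (hf_pos x hx).le ht.1 ht.2
  · filter_upwards [ae_restrict_mem measurableSet_Ioo] with x hx
    exact (continuous_const_rpow (hf_pos x hx).ne').continuousOn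

lemma exists_bound_slideA_inv_abs_log (hb : 0 < b)
    (hf : AEMeasurable f (volume.restrict (Ioo 0 b)))
    (hf_pos : ∀ x ∈ Ioo 0 b, 0 < f x) (hint : IntegrableOn (fun x => f x ^ s) (Ioo 0 b)) :
    ∃ M, ∀ t ∈ Icc 0 s, (slideA b f t)⁻¹ ≤ M ∧ |log (slideA b f t)| ≤ M := by
  have hpos : ∀ t ∈ Icc 0 s, 0 < slideA b f t := fun t ht => slideA_pos hb hf hf_pos hint ht
  have hA := continuousOn_slideA hf hf_pos hint
  obtain ⟨M₁, hM₁⟩ := isCompact_Icc.exists_bound_of_continuousOn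
    (hA.inv₀ fun t ht => (hpos t ht).ne')
  obtain ⟨M₂, hM₂⟩ := isCompact_Icc.exists_bound_of_continuousOn
    (hA.log fun t ht => (hpos t ht).ne')
  refine ⟨max M₁ M₂, fun t ht => ⟨?_, ?_⟩⟩
  · exact (le_abs_self _).trans ((hM₁ t ht).trans (le_max_left _ _))
  · exact (hM₂ t ht).trans (le_max_right _ _)

noncomputable def slideIntegrand (b : ℝ) (f : ℝ → ℝ) (t x : ℝ) : ℝ :=
  f x ^ t / slideA b f t * log (x * (f x ^ t / slideA b f t))

lemma aestronglyMeasurable_slideIntegrand (hf : AEMeasurable f (volume.restrict (Ioo 0 b)))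
    (t : ℝ) : AEStronglyMeasurable (slideIntegrand b f t) (volume.restrict (Ioo 0 b)) := by
  have hq := (hf.pow_const t).div_const (slideA b f t)
  exact (hq.mul (measurable_log.comp_aemeasurable (aemeasurable_id.mul hq))).aestronglyMeasurable

lemma exists_integrable_bound_slideIntegrand (hb : 0 < b)
    (hf : AEMeasurable f (volume.restrict (Ioo 0 b)))
    (hf_pos : ∀ x ∈ Ioo 0 b, 0 < f x) (hint : IntegrableOn (fun x => f x ^ s) (Ioo 0 b)) :
    ∃ g : ℝ → ℝ, IntegrableOn g (Ioo 0 b) ∧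
      ∀ t ∈ Icc 0 (s / 2), ∀ x ∈ Ioo 0 b, |slideIntegrand b f t x| ≤ g x := by
  obtain ⟨M, hM⟩ := exists_bound_slideA_inv_abs_log hb hf hf_pos hint
  refine ⟨fun x => M * (log x ^ 2 + (1 + f x ^ s) * (3 + M)), ?_, fun t ht x hx => ?_⟩
  · have hone := (integrableOn_const (C := (1 : ℝ)) measure_Ioo_lt_top.ne).add hint
    exact ((integrableOn_log_sq hb).add (hone.mul_const _)).const_mul M
  have ht' : t ∈ Icc 0 s := ⟨ht.1, by linarith [ht.1, ht.2]⟩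
  have hA := slideA_pos hb hf hf_pos hint ht'
  obtain ⟨hinv, hlog⟩ := hM t ht'
  have hM0 : 0 ≤ M := (inv_pos.2 hA).le.trans hinv
  have hfs : 0 ≤ 1 + f x ^ s := by linarith [rpow_nonneg (hf_pos x hx).le s]
  calc |slideIntegrand b f t x|
      ≤ (slideA b f t)⁻¹ * (log x ^ 2 + (1 + f x ^ s) * (3 + |log (slideA b f t)|)) :=
        abs_rpow_div_mul_log_le hx.1 (hf_pos x hx) ht.1 (by linarith [ht.2]) hA
    _ ≤ M * (log x ^ 2 + (1 + f x ^ s) * (3 + M)) := by gcongr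

lemma integrableOn_slideIntegrand (hb : 0 < b)
    (hf : AEMeasurable f (volume.restrict (Ioo 0 b)))
    (hf_pos : ∀ x ∈ Ioo 0 b, 0 < f x) (hint : IntegrableOn (fun x => f x ^ s) (Ioo 0 b))
    {t : ℝ} (ht : t ∈ Icc 0 (s / 2)) : IntegrableOn (slideIntegrand b f t) (Ioo 0 b) := by
  obtain ⟨g, hg, hbound⟩ := exists_integrable_bound_slideIntegrand hb hf hf_pos hint
  refine hg.mono' (aestronglyMeasurable_slideIntegrand hf t) ?_
  filter_upwards [ae_restrict_mem measurableSet_Ioo] with x hx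
  exact hbound t ht x hx

lemma continuousOn_slideFun (hb : 0 < b) (hf : AEMeasurable f (volume.restrict (Ioo 0 b)))
    (hf_pos : ∀ x ∈ Ioo 0 b, 0 < f x) (hint : IntegrableOn (fun x => f x ^ s) (Ioo 0 b)) :
    ContinuousOn (slideFun b f) (Icc 0 (s / 2)) := by
  obtain ⟨g, hg, hbound⟩ := exists_integrable_bound_slideIntegrand hb hf hf_pos hint
  have hsub : Icc 0 (s / 2) ⊆ Icc 0 s := fun t ht => ⟨ht.1, by linarith [ht.1, ht.2]⟩
  have hA := (continuousOn_slideA hf hf_pos hint).mono hsub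
  refine continuousOn_const.sub (continuousOn_of_dominated
    (F := slideIntegrand b f) (fun t _ => aestronglyMeasurable_slideIntegrand hf t)
    (fun t ht => ?_) hg ?_)
  · filter_upwards [ae_restrict_mem measurableSet_Ioo] with x hx
    exact hbound t ht x hx
  · filter_upwards [ae_restrict_mem measurableSet_Ioo] with x hx
    have hq : ContinuousOn (fun t => f x ^ t / slideA b f t) (Icc 0 (s / 2)) :=
      (continuous_const_rpow (hf_pos x hx).ne').continuousOn.div hA
        fun t ht => (slideA_pos hb hf hf_pos hint (hsub ht)).ne'
    refine hq.mul ((continuousOn_const.mul hq).log fun t ht => ?_)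
    have := slideA_pos hb hf hf_pos hint (hsub ht)
    have := rpow_pos_of_pos (hf_pos x hx) t
    exact (mul_pos hx.1 (by positivity)).ne'

lemma slideFun_zero (hb : 0 < b) : slideFun b f 0 = 0 := by
  have hlog : IntegrableOn log (Ioo 0 b) :=
    (intervalIntegrable_iff_integrableOn_Ioo_of_le hb.le).1
      intervalIntegral.intervalIntegrable_log'
  have hsplit : EqOn (fun x => log (x * (1 / b))) (fun x => log x - log b) (Ioo 0 b) := by
    intro x hx
    show log (x * (1 / b)) = log x - log b
    rw [log_mul hx.1.ne' (by positivity), one_div, log_inv, sub_eq_add_neg]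
  have hint_log : ∫ x in Ioo 0 b, log x = b * log b - b := by
    rw [← integral_Ioc_eq_integral_Ioo, ← intervalIntegral.integral_of_le hb.le, integral_log]
    simp
  simp only [slideFun, rpow_zero, slideA_zero hb.le]
  rw [integral_const_mul, setIntegral_congr_fun measurableSet_Ioo hsplit,
    integral_sub hlog (integrableOn_const measure_Ioo_lt_top.ne), hint_log, setIntegral_const,
    volume_real_Ioo_of_le hb.le]
  field_simp
  ring

end SlideFunction

/-- If `f : (0,b) → (0,∞)` is monotone decreasing with `∫₀ᵇ f^s < ∞` for some `s > 0`,
then the slide function `σ_f` is defined (all integrals converge) on `[0, s/2]`,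
`σ_f(0) = 0`, and `σ_f` is continuous from the right at `0`. -/
theorem slideFun_defined_and_right_continuous (b : ℝ) (hb : 0 < b) (f : ℝ → ℝ)
    (hf_mono : AntitoneOn f (Set.Ioo 0 b)) (hf_pos : ∀ x ∈ Set.Ioo 0 b, 0 < f x)
    (s : ℝ) (hs : 0 < s) (hint : IntegrableOn (fun x => f x ^ s) (Set.Ioo 0 b)) :
    (∀ t ∈ Set.Icc (0:ℝ) (s / 2),
        IntegrableOn (fun x => f x ^ t) (Set.Ioo 0 b) ∧
        IntegrableOn (fun x =>
          (f x ^ t / slideA b f t) * Real.log (x * (f x ^ t / slideA b f t)))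
          (Set.Ioo 0 b)) ∧
      slideFun b f 0 = 0 ∧
      ContinuousWithinAt (slideFun b f) (Set.Ici 0) 0 := by
  have hf : AEMeasurable f (volume.restrict (Ioo 0 b)) :=
    aemeasurable_restrict_of_antitoneOn measurableSet_Ioo hf_mono
  refine ⟨fun t ht => ⟨integrableOn_rpow_of_le hf hf_pos hint ht.1 (by linarith [ht.2]),
    integrableOn_slideIntegrand hb hf hf_pos hint ht⟩, slideFun_zero hb, ?_⟩
  have hcont := continuousOn_slideFun hb hf hf_pos hint 0 ⟨le_rfl, by positivity⟩
  exact hcont.mono_of_mem_nhdsWithin (Icc_mem_nhdsGE (by positivity))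
end

section
/- Let D = (d₁, ..., dₙ) with d₁ ≥ d₂ ≥ ... ≥ dₙ > 0, and let f_D be the step function on [0,1) taking the value dᵢ on [(i-1)/n, i/n). Then the first slide derivative of f_D is given by ψ₁(f_D) = (1/n)·∑_{i=2}^{n-1} i·ln(i)·ln(d_{i+1}/dᵢ) + (ln(n)/n)·∑_{i=1}^{n-1} ln(dᵢ/dₙ). -/
open MeasureTheory Real Finset

/-!
On the step `(i / n, (i + 1) / n)`, where `f = cᵢ := d (i + 1)`, the integrand of `σ_f` is
`a * log (x * a)` with `a` constant, whose integral is explicit. With `η = negMulLog` and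
`p i t = cᵢ ^ t / ∑ⱼ cⱼ ^ t` (the paper's `aᵢ(t) / n`) this gives
`σ_f(t) = ∑ᵢ (η (p i t) - p i t * (η i - η (i + 1)))`, the entropy of `p(t)` minus the mean of
the weights `η i - η (i + 1) = (i + 1) log (i + 1) - i log i`. At `t = 0` the distribution `p` is
uniform, where the entropy is stationary, so `σ_f'(0) = -∑ᵢ pᵢ'(0) (η i - η (i + 1))` with
`pᵢ'(0) = (log cᵢ - mean of log c) / n`; Abel summation turns this into the stated form.
-/

theorem intervalIntegral_mul_log_mul_const {a : ℝ} (ha : a ≠ 0) (α β : ℝ) :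
    ∫ x in α..β, a * log (x * a) = negMulLog (α * a) - negMulLog (β * a) - (β - α) * a := by
  rw [intervalIntegral.integral_const_mul, intervalIntegral.integral_comp_mul_right _ ha,
    integral_log, smul_eq_mul, mul_inv_cancel_left₀ ha]
  simp only [negMulLog]
  ring

theorem intervalIntegrable_mul_log_mul_const {a : ℝ} (ha : a ≠ 0) (α β : ℝ) :
    IntervalIntegrable (fun x => a * log (x * a)) volume α β := by
  have h := (intervalIntegral.intervalIntegrable_log' (a := α * a) (b := β * a)).comp_mul_right
    (c := a)
  rw [mul_div_cancel_right₀ _ ha, mul_div_cancel_right₀ _ ha] at h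
  exact h.const_mul a

theorem setIntegral_Ioo_zero_one_eq_sum {n : ℕ} (hn : 0 < n) {φ : ℝ → ℝ} (ψ : ℕ → ℝ → ℝ)
    (hφ : ∀ i < n, Set.EqOn φ (ψ i) (Set.Ioo (i / n) ((i + 1) / n)))
    (hψ : ∀ i < n, IntervalIntegrable (ψ i) volume (i / n) ((i + 1) / n)) :
    ∫ x in Set.Ioo 0 1, φ x = ∑ i ∈ range n, ∫ x in (i / n : ℝ)..((i + 1) / n), ψ i x := by
  have hn' : (n : ℝ) ≠ 0 := by positivity
  have hφψ : ∀ i < n, Set.EqOn φ (ψ i) (Set.uIoo (i / n : ℝ) ((i + 1) / n)) := fun i hi => by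
    rw [Set.uIoo_of_le (by gcongr; linarith)]
    exact hφ i hi
  have hsplit := intervalIntegral.sum_integral_adjacent_intervals (μ := volume) (f := φ)
    (a := fun i : ℕ => (i / n : ℝ)) (n := n) fun i hi => by
      simpa using (hψ i hi).congr_uIoo (hφψ i hi).symm
  simp only [Nat.cast_zero, zero_div, div_self hn', Nat.cast_add, Nat.cast_one] at hsplit
  rw [← integral_Ioc_eq_integral_Ioo, ← intervalIntegral.integral_of_le zero_le_one, ← hsplit]
  exact sum_congr rfl fun i hi => intervalIntegral.integral_congr_uIoo (hφψ i (mem_range.mp hi))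

theorem eqOn_Ioo_of_eq_floor {n : ℕ} {f : ℝ → ℝ} {d : ℕ → ℝ}
    (hf : ∀ x ∈ Set.Ioo (0 : ℝ) 1, f x = d (⌊x * n⌋₊ + 1)) {i : ℕ} (hi : i < n) :
    Set.EqOn f (fun _ => d (i + 1)) (Set.Ioo (i / n) ((i + 1) / n)) := by
  intro x hxi
  have hn : (0 : ℝ) < n := by exact_mod_cast hi.pos
  have hx : x ∈ Set.Ioo (0 : ℝ) 1 :=
    ⟨(div_nonneg i.cast_nonneg hn.le).trans_lt hxi.1,
      hxi.2.trans_le ((div_le_one hn).mpr (by exact_mod_cast hi))⟩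
  rw [hf x hx, (Nat.floor_eq_iff (mul_pos hx.1 hn).le).mpr
    ⟨((div_lt_iff₀ hn).mp hxi.1).le, (lt_div_iff₀ hn).mp hxi.2⟩]

noncomputable def normalizedPow {ι : Type*} (s : Finset ι) (c : ι → ℝ) (t : ℝ) (i : ι) : ℝ :=
  c i ^ t / ∑ j ∈ s, c j ^ t

section NormalizedPow

variable {ι : Type*} {s : Finset ι} {c : ι → ℝ}

theorem sum_rpow_pos (hs : s.Nonempty) (hc : ∀ i ∈ s, 0 < c i) (t : ℝ) :
    0 < ∑ i ∈ s, c i ^ t :=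
  sum_pos (fun i hi => rpow_pos_of_pos (hc i hi) t) hs

theorem sum_normalizedPow (hs : s.Nonempty) (hc : ∀ i ∈ s, 0 < c i) (t : ℝ) :
    ∑ i ∈ s, normalizedPow s c t i = 1 := by
  simp only [normalizedPow]
  rw [← sum_div, div_self (sum_rpow_pos hs hc t).ne']

theorem normalizedPow_zero (i : ι) : normalizedPow s c 0 i = 1 / #s := by
  simp [normalizedPow]

theorem hasDerivAt_normalizedPow (hs : s.Nonempty) (hc : ∀ i ∈ s, 0 < c i) {i : ι}
    (hi : i ∈ s) :
    HasDerivAt (fun t : ℝ => normalizedPow s c t i)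
      ((log (c i) - (∑ j ∈ s, log (c j)) / #s) / #s) 0 := by
  have hpow : ∀ j ∈ s, HasDerivAt (fun t : ℝ => c j ^ t) (log (c j)) 0 := fun j hj => by
    simpa using (hasStrictDerivAt_const_rpow (hc j hj) 0).hasDerivAt
  have hcard : (#s : ℝ) ≠ 0 := by simp [hs.ne_empty]
  refine ((hpow i hi).div (HasDerivAt.fun_sum hpow) (by simpa using hcard)).congr_deriv ?_
  simp only [rpow_zero, sum_const, nsmul_eq_mul, mul_one, one_mul]
  field_simp

theorem hasDerivAt_sum_negMulLog_normalizedPow_sub_mul (hs : s.Nonempty)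
    (hc : ∀ i ∈ s, 0 < c i) (w : ι → ℝ) :
    HasDerivAt
      (fun t => ∑ i ∈ s, (negMulLog (normalizedPow s c t i) - normalizedPow s c t i * w i))
      (-∑ i ∈ s, (log (c i) - (∑ j ∈ s, log (c j)) / #s) / #s * w i) 0 := by
  have hcard : (#s : ℝ) ≠ 0 := by simp [hs.ne_empty]
  have hterm : ∀ i ∈ s, HasDerivAt
      (fun t => negMulLog (normalizedPow s c t i) - normalizedPow s c t i * w i)
      ((-log (1 / #s) - 1) * ((log (c i) - (∑ j ∈ s, log (c j)) / #s) / #s) -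
        (log (c i) - (∑ j ∈ s, log (c j)) / #s) / #s * w i) 0 := fun i hi => by
    have hp := hasDerivAt_normalizedPow hs hc hi
    have hη := hasDerivAt_negMulLog (x := 1 / #s) (by positivity)
    exact (hη.comp_of_eq 0 hp (normalizedPow_zero i).symm).sub (hp.mul_const (w i))
  have hmean : ∑ i ∈ s, (log (c i) - (∑ j ∈ s, log (c j)) / #s) / #s = 0 := by
    rw [← sum_div, sum_sub_distrib, sum_const, nsmul_eq_mul, mul_div_cancel₀ _ hcard, sub_self,
      zero_div]
  refine (HasDerivAt.fun_sum hterm).congr_deriv ?_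
  rw [sum_sub_distrib, ← mul_sum, hmean]
  ring

end NormalizedPow

section StepFunction

variable {n : ℕ} {f : ℝ → ℝ} {c : ℕ → ℝ}

theorem slideA_of_step (hn : 0 < n)
    (hf : ∀ i < n, Set.EqOn f (fun _ => c i) (Set.Ioo (i / n) ((i + 1) / n))) (t : ℝ) :
    slideA 1 f t = (∑ i ∈ range n, c i ^ t) / n := by
  rw [slideA, setIntegral_Ioo_zero_one_eq_sum hn (fun i _ => c i ^ t)
    (fun i hi x hx => by rw [hf i hi hx]) (fun i _ => intervalIntegrable_const), sum_div]
  refine sum_congr rfl fun i _ => ?_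
  rw [intervalIntegral.integral_const, smul_eq_mul]
  field_simp
  ring

theorem slideFun_of_step (hn : 0 < n) (hc : ∀ i < n, 0 < c i)
    (hf : ∀ i < n, Set.EqOn f (fun _ => c i) (Set.Ioo (i / n) ((i + 1) / n))) (t : ℝ) :
    slideFun 1 f t = ∑ i ∈ range n, (negMulLog (normalizedPow (range n) c t i) -
      normalizedPow (range n) c t i * (negMulLog i - negMulLog (i + 1))) := by
  have hc' : ∀ i ∈ range n, 0 < c i := fun i hi => hc i (mem_range.mp hi)
  set a : ℕ → ℝ := fun i => c i ^ t / ((∑ j ∈ range n, c j ^ t) / n) with ha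
  have ha0 : ∀ i < n, a i ≠ 0 := fun i hi => by
    have := rpow_pos_of_pos (hc i hi) t
    have := sum_rpow_pos (nonempty_range_iff.mpr hn.ne') hc' t
    positivity
  have hpiece : ∀ i ∈ range n, ∫ x in (i / n : ℝ)..((i + 1) / n), a i * log (x * a i) =
      normalizedPow (range n) c t i * (negMulLog i - negMulLog (i + 1)) -
        negMulLog (normalizedPow (range n) c t i) - normalizedPow (range n) c t i := by
    intro i hi
    have hscale : ∀ x : ℝ, x / n * a i = x * normalizedPow (range n) c t i := fun x => by
      rw [ha, normalizedPow]
      field_simp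
    rw [intervalIntegral_mul_log_mul_const (ha0 i (mem_range.mp hi)), hscale, hscale, ← sub_div,
      hscale, negMulLog_mul, negMulLog_mul]
    ring
  rw [slideFun, slideA_of_step hn hf,
    setIntegral_Ioo_zero_one_eq_sum hn (fun i x => a i * log (x * a i))
      (fun i hi x hx => by rw [hf i hi hx])
      (fun i hi => intervalIntegrable_mul_log_mul_const (ha0 i hi) _ _),
    sum_congr rfl hpiece]
  simp only [sum_sub_distrib]
  rw [sum_normalizedPow (nonempty_range_iff.mpr hn.ne') hc']
  ring

end StepFunction

theorem sum_Icc_one_eq_sum_range {M : Type*} [AddCommMonoid M] (F : ℕ → M) (m : ℕ) :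
    ∑ k ∈ Icc 1 m, F k = ∑ i ∈ range m, F (i + 1) := by
  rw [← Ico_add_one_right_eq_Icc, range_eq_Ico, sum_Ico_add', zero_add]

theorem sum_range_negMulLog_sub (k : ℕ) :
    ∑ i ∈ range k, (negMulLog i - negMulLog (i + 1)) = k * log k := by
  have htel := sum_range_sub' (fun i : ℕ => negMulLog i) k
  push_cast at htel
  rw [htel]
  simp [negMulLog]

theorem sum_range_mul_negMulLog_sub {n : ℕ} (hn : 0 < n) (ℓ : ℕ → ℝ) :
    ∑ i ∈ range n, ℓ (i + 1) * (negMulLog i - negMulLog (i + 1)) =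
      n * log n * ℓ n - ∑ k ∈ Icc 2 (n - 1), k * log k * (ℓ (k + 1) - ℓ k) := by
  have hparts := sum_range_by_parts (fun i => ℓ (i + 1))
    (fun i => negMulLog i - negMulLog (i + 1)) n
  simp only [smul_eq_mul, sum_range_negMulLog_sub, Nat.sub_add_cancel hn] at hparts
  rw [hparts, mul_comm (ℓ n)]
  congr 1
  have hone : ∑ k ∈ Icc 2 (n - 1), k * log k * (ℓ (k + 1) - ℓ k) =
      ∑ k ∈ Icc 1 (n - 1), k * log k * (ℓ (k + 1) - ℓ k) := by
    refine sum_subset (Icc_subset_Icc_left one_le_two) fun k hk hk2 => ?_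
    obtain rfl : k = 1 := by simp only [mem_Icc] at hk hk2; omega
    simp
  rw [hone, sum_Icc_one_eq_sum_range]
  exact sum_congr rfl fun _ _ => by push_cast; ring

theorem neg_sum_centered_mul_negMulLog_sub {n : ℕ} (hn : 0 < n) (ℓ : ℕ → ℝ) :
    -∑ i ∈ range n, (ℓ (i + 1) - (∑ j ∈ range n, ℓ (j + 1)) / n) / n *
        (negMulLog i - negMulLog (i + 1)) =
      1 / n * ∑ k ∈ Icc 2 (n - 1), k * log k * (ℓ (k + 1) - ℓ k) +
        log n / n * ∑ k ∈ Icc 1 (n - 1), (ℓ k - ℓ n) := by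
  have hn' : (n : ℝ) ≠ 0 := by positivity
  have hcentered : ∑ k ∈ Icc 1 (n - 1), (ℓ k - ℓ n) = ∑ i ∈ range n, ℓ (i + 1) - n * ℓ n := by
    obtain ⟨m, rfl⟩ := Nat.exists_eq_add_of_lt hn
    rw [sum_Icc_one_eq_sum_range, zero_add, Nat.add_sub_cancel, sum_sub_distrib, sum_range_succ]
    simp only [sum_const, card_range, nsmul_eq_mul]
    push_cast
    ring
  have hsplit : ∀ i ∈ range n, (ℓ (i + 1) - (∑ j ∈ range n, ℓ (j + 1)) / n) / n *
      (negMulLog i - negMulLog (i + 1)) = 1 / n * (ℓ (i + 1) * (negMulLog i - negMulLog (i + 1)))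
        - (∑ j ∈ range n, ℓ (j + 1)) / n ^ 2 * (negMulLog i - negMulLog (i + 1)) :=
    fun i _ => by ring
  rw [sum_congr rfl hsplit, sum_sub_distrib, ← mul_sum, ← mul_sum, sum_range_negMulLog_sub,
    sum_range_mul_negMulLog_sub hn, hcentered]
  field_simp
  ring

theorem first_slide_derivative_of_step_function_general
    (n : ℕ) (hn : 0 < n) (d : ℕ → ℝ)
    (hpos : ∀ i, 1 ≤ i → i ≤ n → 0 < d i)
    (fD : ℝ → ℝ) (hfD : ∀ x ∈ Set.Ioo (0:ℝ) 1, fD x = d (⌊x * n⌋₊ + 1)) :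
    HasDerivWithinAt (slideFun 1 fD)
      ((1 / n) * ∑ i ∈ Finset.Icc 2 (n - 1),
          (i : ℝ) * Real.log i * Real.log (d (i + 1) / d i) +
        (Real.log n / n) * ∑ i ∈ Finset.Icc 1 (n - 1), Real.log (d i / d n))
      (Set.Ici 0) 0 := by
  have hc : ∀ i < n, 0 < d (i + 1) := fun i hi => hpos _ (by omega) (by omega)
  have hσ := funext (slideFun_of_step (c := fun i => d (i + 1)) hn hc
    fun _ hi => eqOn_Ioo_of_eq_floor hfD hi)
  have hderiv := hasDerivAt_sum_negMulLog_normalizedPow_sub_mul (c := fun i => d (i + 1))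
    (nonempty_range_iff.mpr hn.ne') (fun i hi => hc i (mem_range.mp hi))
    (fun i => negMulLog i - negMulLog (i + 1))
  rw [card_range, neg_sum_centered_mul_negMulLog_sub hn fun k => log (d k)] at hderiv
  rw [hσ]
  refine (hderiv.congr_deriv ?_).hasDerivWithinAt
  congr 2
  · refine sum_congr rfl fun k hk => ?_
    simp only [mem_Icc] at hk
    rw [log_div (hpos _ (by omega) (by omega)).ne' (hpos _ (by omega) (by omega)).ne']
  · refine sum_congr rfl fun k hk => ?_
    simp only [mem_Icc] at hk
    rw [log_div (hpos _ (by omega) (by omega)).ne' (hpos _ (by omega) le_rfl).ne']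

/-- For `d 1 ≥ d 2 ≥ ... ≥ d n > 0` and `f_D` the step function on `[0,1)` taking the
value `d i` on `[(i-1)/n, i/n)`, the first slide derivative of `f_D` equals
`(1/n) ∑_{i=2}^{n-1} i ln(i) ln(d_{i+1}/d_i) + (ln n / n) ∑_{i=1}^{n-1} ln(d_i/d_n)`. -/
theorem first_slide_derivative_of_step_function
    (n : ℕ) (hn : 0 < n) (d : ℕ → ℝ)
    (hmono : ∀ i, 1 ≤ i → i < n → d (i + 1) ≤ d i)
    (hpos : ∀ i, 1 ≤ i → i ≤ n → 0 < d i)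
    (fD : ℝ → ℝ) (hfD : ∀ x ∈ Set.Ioo (0:ℝ) 1, fD x = d (⌊x * n⌋₊ + 1)) :
    HasDerivWithinAt (slideFun 1 fD)
      ((1 / n) * ∑ i ∈ Finset.Icc 2 (n - 1),
          (i : ℝ) * Real.log i * Real.log (d (i + 1) / d i) +
        (Real.log n / n) * ∑ i ∈ Finset.Icc 1 (n - 1), Real.log (d i / d n))
      (Set.Ici 0) 0 :=
  first_slide_derivative_of_step_function_general n hn d hpos fD hfD
end
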